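/- arXiv:1010.6257 — 7 statements merged into one kernel-verified Lean document; each statement's English description precedes it below -/
import Mathlib

section
/- Let V be a finite set, r ∈ V, and e : V × V → ℕ a symmetric function with e(v,v) = 0 for all v (a finite loopless multigraph on V), and assume the graph on V with adjacency u ∼ v ⟺ e(u,v) > 0 is connected. Let Γ be the abelian group of functions y : V → ℤ with y(r) = 0, equipped with the symmetric bilinear pairing ⟨y,z⟩ = Σ_{{u,v}} e(u,v)(y(u) − y(v))(z(u) − z(v)), the sum over unordered pairs {u,v} ⊆ V. Then a nonzero x ∈ Γ is irreducible if and only if there exists a nonempty subset T ⊆ V ∖ {r} such that x equals the indicator function [T] of T or its negative −[T], and both induced subgraphs on T and on V ∖ T (with adjacency e > 0) are connected. -/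
/-- The simple graph underlying a finite loopless multigraph with edge
multiplicity function `e`: two vertices are adjacent iff they are distinct and
joined by at least one edge. -/
def mgraphOf {V : Type*} (e : V → V → ℕ) : SimpleGraph V where
  Adj u v := u ≠ v ∧ (0 < e u v ∨ 0 < e v u)
  symm := ⟨fun _ _ h => ⟨h.1.symm, h.2.symm⟩⟩
  loopless := ⟨fun _ h => h.1 rfl⟩

/-- The pairing on functions `V → ℤ` associated to a multigraph:
`⟨y,z⟩ = Σ_{{u,v}} e(u,v)(y(u) − y(v))(z(u) − z(v))`, the sum being over
unordered pairs `{u,v} ⊆ V` (diagonal pairs contribute zero). -/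
def gpair {V : Type*} [Fintype V] [DecidableEq V] (e : V → V → ℕ)
    (he : ∀ u v, e u v = e v u) (y z : V → ℤ) : ℤ :=
  ∑ p ∈ (Finset.univ : Finset V).sym2,
    Sym2.lift ⟨fun u v => (e u v : ℤ) * (y u - y v) * (z u - z v),
      fun u v => by show (e u v : ℤ) * (y u - y v) * (z u - z v) = (e v u : ℤ) * (y v - y u) * (z v - z u); rw [he u v]; ring⟩ p

/-
Truncating `x` at `0` and `1` splits it into two comonotone parts, whose pairing is
termwise nonnegative; so an irreducible `x` takes values in `{0, 1}` or in `{0, -1}`, i.e.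
`x = ±[T]`. If `T`, or `V ∖ T`, splits into pieces with no edges between them, then a piece `C`
avoiding `r` can be peeled off: `x ∓ [C]` is constant across every edge leaving `C`, so its
pairing with `±[C]` vanishes.

Conversely, let `[T] = y + z`. On every edge the increments of `y` and `z` add up to an element
of `{-1, 0, 1}`, so their product is `≤ 0`, and `⟨y, z⟩ ≥ 0` forces one increment to vanish.
Inside `T` and inside `V ∖ T` both increments then vanish, so by connectedness `y` and `z` are
multiples of `[T]`, and an edge between `T` and `V ∖ T` forces one of them to be zero.
-/

namespace GraphLattice

section Graph

variable {V : Type*} {G : SimpleGraph V}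

theorem eq_of_reachable {β : Type*} {f : V → β} (hf : ∀ u v, G.Adj u v → f u = f v)
    {u v : V} (h : G.Reachable u v) : f u = f v := by
  obtain ⟨p⟩ := h
  induction p with
  | nil => rfl
  | cons hadj _ ih => exact (hf _ _ hadj).trans ih

theorem exists_closed_of_not_preconnected_induce [Fintype V] {S : Set V} {p : V} (hp : p ∈ S)
    (h : ¬ (G.induce S).Preconnected) :
    ∃ C : Finset V, ↑C ⊆ S ∧ C.Nonempty ∧ p ∉ C ∧ ∀ u ∈ C, ∀ v ∈ S, G.Adj u v → v ∈ C := by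
  classical
  obtain ⟨c, hc⟩ : ∃ c : S, ¬ (G.induce S).Reachable ⟨p, hp⟩ c := by
    by_contra! hnear
    exact h fun a b => (hnear a).symm.trans (hnear b)
  refine ⟨Finset.univ.filter fun v => ∃ hv : v ∈ S, ¬ (G.induce S).Reachable ⟨p, hp⟩ ⟨v, hv⟩,
    fun v hv => (Finset.mem_filter.mp hv).2.1,
    ⟨c, Finset.mem_filter.mpr ⟨Finset.mem_univ _, c.2, hc⟩⟩, by simp, ?_⟩
  simp only [Finset.mem_filter, Finset.mem_univ, true_and]
  rintro u ⟨hu, hfar⟩ v hv huv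
  exact ⟨hv, fun hpv => hfar (hpv.trans (SimpleGraph.Adj.reachable (G := G.induce S) huv.symm))⟩

theorem eq_of_preconnected_induce {β : Type*} {S : Set V} (hS : (G.induce S).Preconnected)
    {f : V → β} (hf : ∀ u ∈ S, ∀ v ∈ S, G.Adj u v → f u = f v) {u v : V} (hu : u ∈ S)
    (hv : v ∈ S) : f u = f v :=
  eq_of_reachable (f := f ∘ Subtype.val) (fun a b hab => hf a.1 a.2 b.1 b.2 hab)
    (hS ⟨u, hu⟩ ⟨v, hv⟩)

theorem eq_of_eq_within_sides {β : Type*} {S : Set V} (hS : (G.induce S).Preconnected)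
    (hSc : (G.induce Sᶜ).Preconnected) {f : V → β}
    (hf : ∀ u v, G.Adj u v → (u ∈ S ↔ v ∈ S) → f u = f v) {a b : V} (ha : a ∈ S) (hb : b ∉ S)
    (hab : f a = f b) (u v : V) : f u = f v := by
  have hside : ∀ u, f u = f b := by
    intro u
    by_cases hu : u ∈ S
    · exact (eq_of_preconnected_induce hS
        (fun u hu v hv huv => hf u v huv (iff_of_true hu hv)) hu ha).trans hab
    · exact eq_of_preconnected_induce hSc
        (fun u hu v hv huv => hf u v huv (iff_of_false hu hv)) hu hb
  exact (hside u).trans (hside v).symm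

end Graph

theorem pos_of_adj {V : Type*} {e : V → V → ℕ} (he : ∀ u v, e u v = e v u) {u v : V}
    (h : (mgraphOf e).Adj u v) : 0 < e u v :=
  h.2.elim id fun h' => he u v ▸ h'

variable {V : Type*} [DecidableEq V]

def indicator (T : Finset V) : V → ℤ := fun v => if v ∈ T then 1 else 0

theorem antivary_of_indicator_eq_add {y z : V → ℤ} {T : Finset V} (h : indicator T = y + z) :
    Antivary y z := by
  refine antivary_iff_forall_mul_nonpos.mpr fun i j => ?_
  have hi := congrFun h i
  have hj := congrFun h j
  simp only [indicator, Pi.add_apply] at hi hj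
  have hsum : -1 ≤ (y j - y i) + (z j - z i) ∧ (y j - y i) + (z j - z i) ≤ 1 := by
    split_ifs at hi hj <;> constructor <;> omega
  nlinarith [sq_nonneg (y j - y i - (z j - z i))]

variable [Fintype V] {e : V → V → ℕ} {he : ∀ u v, e u v = e v u}

section Pairing

variable {y z : V → ℤ}

theorem gpair_nonneg (h : ∀ u v, 0 < e u v → 0 ≤ (y u - y v) * (z u - z v)) :
    0 ≤ gpair e he y z := by
  refine Finset.sum_nonneg fun p _ => p.ind fun u v => ?_
  show 0 ≤ (e u v : ℤ) * (y u - y v) * (z u - z v)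
  rcases (e u v).eq_zero_or_pos with h0 | hpos
  · simp [h0]
  · rw [mul_assoc]
    exact mul_nonneg (Int.natCast_nonneg _) (h u v hpos)

theorem gpair_nonneg_of_monovary (h : Monovary y z) : 0 ≤ gpair e he y z :=
  gpair_nonneg fun u v _ => h.sub_mul_sub_nonneg v u

theorem gpair_neg_neg : gpair e he (-y) (-z) = gpair e he y z :=
  Finset.sum_congr rfl fun p _ => p.ind fun u v => by
    show (e u v : ℤ) * (-y u - -y v) * (-z u - -z v) = (e u v : ℤ) * (y u - y v) * (z u - z v)
    ring

theorem eq_or_eq_of_antivary_of_gpair_nonneg (hyz : Antivary y z) (h : 0 ≤ gpair e he y z)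
    {u v : V} (huv : 0 < e u v) : y u = y v ∨ z u = z v := by
  have hterm : ∀ a b, (e a b : ℤ) * (y a - y b) * (z a - z b) ≤ 0 := fun a b => by
    rw [mul_assoc]
    exact mul_nonpos_of_nonneg_of_nonpos (Int.natCast_nonneg _) (hyz.sub_mul_sub_nonpos b a)
  by_contra! hne
  have hlt : gpair e he y z < 0 := by
    refine (Finset.sum_lt_sum (g := 0) (fun p _ => p.ind hterm)
      ⟨s(u, v), by simp, ?_⟩).trans_eq (by simp)
    show (e u v : ℤ) * (y u - y v) * (z u - z v) < 0
    refine (hterm u v).lt_of_ne ?_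
    exact mul_ne_zero (mul_ne_zero (by omega) (sub_ne_zero.mpr hne.1)) (sub_ne_zero.mpr hne.2)
  exact hlt.not_ge h

end Pairing

def IsReducible (r : V) (e : V → V → ℕ) (he : ∀ u v, e u v = e v u) (x : V → ℤ) : Prop :=
  ∃ y z : V → ℤ, y r = 0 ∧ z r = 0 ∧ y ≠ 0 ∧ z ≠ 0 ∧ x = y + z ∧ 0 ≤ gpair e he y z

variable {r : V} {x : V → ℤ}

theorem IsReducible.neg (h : IsReducible r e he x) : IsReducible r e he (-x) := by
  obtain ⟨y, z, hyr, hzr, hy, hz, rfl, hyz⟩ := h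
  exact ⟨-y, -z, by simp [hyr], by simp [hzr], neg_ne_zero.mpr hy, neg_ne_zero.mpr hz,
    neg_add y z, by rwa [gpair_neg_neg]⟩

theorem isReducible_neg_iff : IsReducible r e he (-x) ↔ IsReducible r e he x :=
  ⟨fun h => neg_neg x ▸ h.neg, .neg⟩

theorem isReducible_of_exists_pos_of_exists_lt_zero_or_one_lt (hxr : x r = 0)
    (hpos : ∃ u, 0 < x u) (hout : ∃ v, x v < 0 ∨ 1 < x v) : IsReducible r e he x := by
  set f : ℤ → ℤ := fun t => min (max t 0) 1
  have hf : Monotone f := fun a b hab => by simp only [f]; omega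
  have hg : Monotone fun t => t - f t := fun a b hab => by simp only [f]; omega
  obtain ⟨u, hu⟩ := hpos
  obtain ⟨v, hv⟩ := hout
  refine ⟨f ∘ x, (fun t => t - f t) ∘ x, by simp [f, hxr], by simp [f, hxr],
    Function.ne_iff.mpr ⟨u, ?_⟩, Function.ne_iff.mpr ⟨v, ?_⟩, by ext; simp,
    gpair_nonneg_of_monovary ((hf.monovary hg).comp_right x)⟩
  · simp only [Function.comp_apply, Pi.zero_apply, f]; omega
  · simp only [Function.comp_apply, Pi.zero_apply, f]; omega

theorem exists_eq_indicator_of_not_isReducible (hxr : x r = 0) (hx : x ≠ 0)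
    (h : ¬ IsReducible r e he x) :
    ∃ T : Finset V, T.Nonempty ∧ r ∉ T ∧ (x = indicator T ∨ x = -indicator T) := by
  wlog hpos : ∃ u, 0 < x u generalizing x
  · obtain ⟨u, hu⟩ := Function.ne_iff.mp hx
    have hneg : 0 < (-x) u := by
      have := not_lt.mp (not_exists.mp hpos u)
      simp only [Pi.neg_apply, Pi.zero_apply] at hu ⊢; omega
    obtain ⟨T, hT, hrT, hxT⟩ := this (by simp [hxr]) (neg_ne_zero.mpr hx)
      (by rwa [isReducible_neg_iff]) ⟨u, hneg⟩
    exact ⟨T, hT, hrT, hxT.symm.imp neg_inj.mp neg_eq_iff_eq_neg.mp⟩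
  have h01 : ∀ v, x v = 0 ∨ x v = 1 := fun v => by
    by_contra! hv
    exact h (isReducible_of_exists_pos_of_exists_lt_zero_or_one_lt hxr hpos ⟨v, by omega⟩)
  obtain ⟨u, hu⟩ := hpos
  refine ⟨Finset.univ.filter (x · = 1), ⟨u, by have := h01 u; simp; omega⟩, by simp [hxr],
    Or.inl ?_⟩
  funext v
  rcases h01 v with hv | hv <;> simp [indicator, hv]

theorem isReducible_of_jump_across_boundary (hxr : x r = 0) {C : Finset V} (hC : C.Nonempty)
    (hrC : r ∉ C) {ε : ℤ} (hε : ε ≠ 0) (hxC : x ≠ ε • indicator C)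
    (hjump : ∀ u ∈ C, ∀ v ∉ C, 0 < e u v → x v = x u - ε) : IsReducible r e he x := by
  obtain ⟨c, hc⟩ := hC
  refine ⟨x - ε • indicator C, ε • indicator C, by simp [indicator, hxr, hrC],
    by simp [indicator, hrC], sub_ne_zero.mpr hxC,
    Function.ne_iff.mpr ⟨c, by simp [indicator, hc, hε]⟩, (sub_add_cancel _ _).symm,
    gpair_nonneg fun u v huv => ?_⟩
  suffices (x - ε • indicator C) u = (x - ε • indicator C) v ∨
      (ε • indicator C) u = (ε • indicator C) v by
    rcases this with h | h <;> rw [h, sub_self] <;> simp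
  by_cases hu : u ∈ C <;> by_cases hv : v ∈ C
  · right; simp [indicator, hu, hv]
  · left; simp [indicator, hu, hv, hjump u hu v hv huv]
  · left; simp [indicator, hu, hv, hjump v hv u hu (he u v ▸ huv)]
  · right; simp [indicator, hu, hv]

theorem connected_induce_of_not_isReducible {T : Finset V} (hT : T.Nonempty) (hrT : r ∉ T)
    (h : ¬ IsReducible r e he (indicator T)) :
    ((mgraphOf e).induce (T : Set V)).Connected := by
  obtain ⟨t, ht⟩ := hT
  refine (SimpleGraph.connected_iff _).mpr ⟨?_, ⟨⟨t, ht⟩⟩⟩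
  by_contra hT
  obtain ⟨C, hCT, hC, htC, hclosed⟩ :=
    exists_closed_of_not_preconnected_induce (show t ∈ (T : Set V) from ht) hT
  refine h (isReducible_of_jump_across_boundary (by simp [indicator, hrT]) hC
    (fun hr => hrT (hCT hr)) one_ne_zero (Function.ne_iff.mpr ⟨t, by simp [indicator, ht, htC]⟩)
    fun u hu v hv huv => ?_)
  have hvT : v ∉ T := fun hvT => hv (hclosed u hu v hvT ⟨fun h => hv (h ▸ hu), Or.inl huv⟩)
  simp [indicator, Finset.mem_coe.mp (hCT hu), hvT]

theorem connected_induce_compl_of_not_isReducible {T : Finset V} (hT : T.Nonempty)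
    (hrT : r ∉ T) (h : ¬ IsReducible r e he (indicator T)) :
    ((mgraphOf e).induce (T : Set V)ᶜ).Connected := by
  refine (SimpleGraph.connected_iff _).mpr ⟨?_, ⟨⟨r, hrT⟩⟩⟩
  by_contra hTc
  obtain ⟨C, hCT, hC, hrC, hclosed⟩ :=
    exists_closed_of_not_preconnected_induce (show r ∈ (T : Set V)ᶜ from hrT) hTc
  obtain ⟨t, ht⟩ := hT
  have htC : t ∉ C := fun htC => hCT htC ht
  refine h (isReducible_of_jump_across_boundary (by simp [indicator, hrT]) hC hrC
    (neg_ne_zero.mpr one_ne_zero) (Function.ne_iff.mpr ⟨t, by simp [indicator, ht, htC]⟩)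
    fun u hu v hv huv => ?_)
  have hvT : v ∈ T := by
    by_contra hvT
    exact hv (hclosed u hu v hvT ⟨fun h => hv (h ▸ hu), Or.inl huv⟩)
  have huT : u ∉ T := hCT hu
  simp [indicator, huT, hvT]

theorem not_isReducible_indicator (hconn : (mgraphOf e).Connected) {T : Finset V} (hrT : r ∉ T)
    (hT : ((mgraphOf e).induce (T : Set V)).Connected)
    (hTc : ((mgraphOf e).induce (T : Set V)ᶜ).Connected) :
    ¬ IsReducible r e he (indicator T) := by
  rintro ⟨y, z, hyr, hzr, hy, hz, hsum, hpair⟩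
  have hlevel : ∀ u v, (mgraphOf e).Adj u v → y u = y v ∨ z u = z v := fun u v huv =>
    eq_or_eq_of_antivary_of_gpair_nonneg (antivary_of_indicator_eq_add hsum) hpair
      (pos_of_adj he huv)
  have hboth : ∀ u v, (mgraphOf e).Adj u v → (u ∈ T ↔ v ∈ T) → y u = y v ∧ z u = z v := by
    intro u v huv huvT
    have hu := congrFun hsum u
    have hv := congrFun hsum v
    simp only [indicator, huvT, Pi.add_apply] at hu hv
    rcases hlevel u v huv with h | h <;> constructor <;> linarith
  obtain ⟨a, b, ha, hb, hab⟩ : ∃ a b, a ∈ T ∧ b ∉ T ∧ (mgraphOf e).Adj a b := by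
    obtain ⟨⟨t, ht⟩⟩ := hT.nonempty
    obtain ⟨d, -, hd⟩ := (hconn.preconnected t r).some.exists_boundary_dart (T : Set V) ht hrT
    exact ⟨_, _, hd.1, hd.2, d.adj⟩
  have hzero : ∀ w : V → ℤ, w r = 0 → (∀ u v, (mgraphOf e).Adj u v → (u ∈ T ↔ v ∈ T) →
      w u = w v) → w a = w b → w = 0 := fun w hwr hw hwab => funext fun v =>
    (eq_of_eq_within_sides hT.preconnected hTc.preconnected hw ha hb hwab v r).trans hwr
  rcases hlevel a b hab with h | h
  · exact hy (hzero y hyr (fun u v huv huvT => (hboth u v huv huvT).1) h)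
  · exact hz (hzero z hzr (fun u v huv huvT => (hboth u v huv huvT).2) h)

end GraphLattice

open GraphLattice in
theorem graph_lattice_irreducible_general {V : Type*} [Fintype V] [DecidableEq V]
    (r : V) (e : V → V → ℕ) (he : ∀ u v, e u v = e v u)
    (hconn : (mgraphOf e).Connected)
    (x : V → ℤ) (hxr : x r = 0) (hx : x ≠ 0) :
    (¬ ∃ y z : V → ℤ, y r = 0 ∧ z r = 0 ∧ y ≠ 0 ∧ z ≠ 0 ∧
        x = y + z ∧ 0 ≤ gpair e he y z) ↔
    ∃ T : Finset V, T.Nonempty ∧ r ∉ T ∧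
      (x = (fun v => if v ∈ T then (1 : ℤ) else 0) ∨
       x = -(fun v => if v ∈ T then (1 : ℤ) else 0)) ∧
      ((mgraphOf e).induce (↑T : Set V)).Connected ∧
      ((mgraphOf e).induce ((↑T : Set V)ᶜ)).Connected := by
  change ¬ IsReducible r e he x ↔ ∃ T : Finset V, T.Nonempty ∧ r ∉ T ∧
    (x = indicator T ∨ x = -indicator T) ∧ _
  constructor
  · intro hirr
    obtain ⟨T, hT, hrT, hxT⟩ := exists_eq_indicator_of_not_isReducible hxr hx hirr
    have hirrT : ¬ IsReducible r e he (indicator T) := by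
      rcases hxT with rfl | rfl
      exacts [hirr, isReducible_neg_iff.not.mp hirr]
    exact ⟨T, hT, hrT, hxT, connected_induce_of_not_isReducible hT hrT hirrT,
      connected_induce_compl_of_not_isReducible hT hrT hirrT⟩
  · rintro ⟨T, -, hrT, hxT, hT, hTc⟩
    have hirrT := not_isReducible_indicator (he := he) hconn hrT hT hTc
    rcases hxT with rfl | rfl
    exacts [hirrT, isReducible_neg_iff.not.mpr hirrT]

/-- **Irreducible elements of a graph lattice.** Let `e` be a connected finite
loopless multigraph on `V` with root `r`, and let `Γ` be the lattice of
functions `y : V → ℤ` with `y r = 0` under the pairing `gpair`.  A nonzero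
`x ∈ Γ` is irreducible iff `x = ±[T]` for some nonempty `T ⊆ V ∖ {r}` such
that both induced subgraphs on `T` and on `V ∖ T` are connected. -/
theorem graph_lattice_irreducible {V : Type*} [Fintype V] [DecidableEq V]
    (r : V) (e : V → V → ℕ) (he : ∀ u v, e u v = e v u)
    (hloop : ∀ v, e v v = 0) (hconn : (mgraphOf e).Connected)
    (x : V → ℤ) (hxr : x r = 0) (hx : x ≠ 0) :
    (¬ ∃ y z : V → ℤ, y r = 0 ∧ z r = 0 ∧ y ≠ 0 ∧ z ≠ 0 ∧
        x = y + z ∧ 0 ≤ gpair e he y z) ↔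
    ∃ T : Finset V, T.Nonempty ∧ r ∉ T ∧
      (x = (fun v => if v ∈ T then (1 : ℤ) else 0) ∨
       x = -(fun v => if v ∈ T then (1 : ℤ) else 0)) ∧
      ((mgraphOf e).induce (↑T : Set V)).Connected ∧
      ((mgraphOf e).induce ((↑T : Set V)ᶜ)).Connected :=
  graph_lattice_irreducible_general r e he hconn x hxr hx
end

section
/- Let n ≥ 1 and let a_1, …, a_n ≥ 2 be integers, and let Λ(a_1,…,a_n) be the linear lattice on ℤ^n. Then a nonzero vector v ∈ ℤ^n is irreducible with respect to this form if and only if there exist indices 1 ≤ i ≤ j ≤ n and a sign ε ∈ {+1, −1} such that v = ε(x_i + x_{i+1} + ⋯ + x_j), i.e., v is ± the indicator vector of an interval of consecutive indices. -/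
/-!
Padding vectors with a zero on each side, summation by parts gives
`⟨x, y⟩ = ∑ₖ (aₖ - 2) xₖ yₖ + ∑ₚ (Xₚ - Xₚ₊₁) (Yₚ - Yₚ₊₁)`.

If `x + y = ±(x_i + ⋯ + x_j)`, the entries and the increments of `x + y` lie in `{0, ±1}`, so
every summand is `≤ 0`. Hence `⟨x, y⟩ ≥ 0` forces the increments of `x` and of `y` to have
disjoint supports, so that the total variations of `x` and `y` add up to that of the interval
vector, which is `2`; but a nonzero padded vector has total variation at least `2`.

Conversely, let `v ≠ 0` not be `±` an interval vector. If `v` has a zero or a sign change at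
consecutive positions `p, p + 1` of the hull of its support, cutting it there gives
`⟨x, y⟩ = -vₚ vₚ₊₁ ≥ 0`. Otherwise `v` has constant sign `s` on that hull `I`, and
`v = s 1_I + (v - s 1_I)` with every summand above `≥ 0`.
-/

/-- The Gram matrix of the linear lattice `Λ(a₁,…,aₙ)`: diagonal entries `aᵢ`,
entries `-1` between consecutive indices, and `0` otherwise. -/
def linMat {n : ℕ} (a : Fin n → ℤ) (i j : Fin n) : ℤ :=
  if i = j then a i else if (((i : ℕ) : ℤ) - ((j : ℕ) : ℤ)).natAbs = 1 then -1 else 0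

/-- The symmetric bilinear form of the linear lattice `Λ(a₁,…,aₙ)` on `ℤⁿ`. -/
def linForm {n : ℕ} (a : Fin n → ℤ) (x y : Fin n → ℤ) : ℤ :=
  ∑ i, ∑ j, linMat a i j * x i * y j

open Finset

namespace LinearLattice

lemma mul_nonpos_of_abs_add_le_one {b c : ℤ} (h : |b + c| ≤ 1) : b * c ≤ 0 := by
  by_contra! hbc
  rcases mul_pos_iff.1 hbc with ⟨hb, hc⟩ | ⟨hb, hc⟩ <;> rw [abs_le] at h <;> omega

lemma pos_mul_of_pos_mul_succ {R : Type*} [CommRing R] [LinearOrder R] [IsStrictOrderedRing R]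
    {f : ℕ → R} {i j : ℕ} (h : ∀ k, i ≤ k → k < j → 0 < f k * f (k + 1))
    (hi : f i ≠ 0) {m : ℕ} (him : i ≤ m) (hmj : m ≤ j) : 0 < f i * f m := by
  induction m, him using Nat.le_induction with
  | base => exact mul_self_pos.2 hi
  | succ m him ih =>
    have hprod := mul_pos (ih (by omega)) (h m him (by omega))
    have e : f i * f m * (f m * f (m + 1)) = f m * f m * (f i * f (m + 1)) := by ring
    exact pos_of_mul_pos_right (e ▸ hprod) (mul_self_nonneg _)

lemma two_mul_abs_le_sum_abs_sub {R : Type*} [CommRing R] [LinearOrder R]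
    [IsStrictOrderedRing R] {X : ℕ → R} {m N : ℕ} (h0 : X 0 = 0) (hN : X N = 0) (hm : m ≤ N) :
    2 * |X m| ≤ ∑ p ∈ range N, |X p - X (p + 1)| := by
  have hleft : |X m| ≤ ∑ p ∈ range m, |X p - X (p + 1)| :=
    calc |X m| = |∑ p ∈ range m, (X p - X (p + 1))| := by
          rw [sum_range_sub', h0, zero_sub, abs_neg]
      _ ≤ _ := abs_sum_le_sum_abs _ _
  have hright : |X m| ≤ ∑ p ∈ Ico m N, |X p - X (p + 1)| :=
    calc |X m| = |∑ k ∈ range (N - m), (X (m + k) - X (m + (k + 1)))| := by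
          rw [sum_range_sub' (fun k => X (m + k)), add_zero, Nat.add_sub_cancel' hm, hN, sub_zero]
      _ ≤ ∑ k ∈ range (N - m), |X (m + k) - X (m + k + 1)| := abs_sum_le_sum_abs _ _
      _ = _ := (sum_Ico_eq_sum_range (fun p => |X p - X (p + 1)|) _ _).symm
  rw [← sum_range_add_sum_Ico _ hm]
  linarith

lemma sum_range_mul_tridiagonal_eq {R : Type*} [CommRing R] (A X Y : ℕ → R) (m : ℕ)
    (hX : X 0 = 0) (hXm : X (m + 1) = 0) (hYm : Y (m + 1) = 0) :
    ∑ k ∈ range m, X (k + 1) * (A (k + 1) * Y (k + 1) - Y k - Y (k + 2)) =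
      ∑ k ∈ range m, (A (k + 1) - 2) * (X (k + 1) * Y (k + 1)) +
        ∑ p ∈ range (m + 1), (X p - X (p + 1)) * (Y p - Y (p + 1)) := by
  set G : ℕ → R := fun k => X k * (Y k - Y (k + 1))
  have hterm : ∀ k, X (k + 1) * (A (k + 1) * Y (k + 1) - Y k - Y (k + 2)) =
      (A (k + 1) - 2) * (X (k + 1) * Y (k + 1)) + (X k - X (k + 1)) * (Y k - Y (k + 1)) +
        (G (k + 1) - G k) := fun k => by simp only [G]; ring
  rw [sum_congr rfl fun k _ => hterm k, sum_add_distrib, sum_add_distrib, sum_range_sub,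
    sum_range_succ _ m]
  simp only [G, hX, hXm, hYm]
  ring

lemma sub_mul_sub_nonneg_of_indicator {R : Type*} [Ring R] [PartialOrder R] {X Y : ℕ → R}
    {P : ℕ → Prop} [DecidablePred P] {s : R}
    (hX : ∀ q, X q = if P q then s else 0) (hY : ∀ q, ¬ P q → Y q = 0) (hsY : ∀ q, 0 ≤ s * Y q)
    (q : ℕ) : 0 ≤ (X q - X (q + 1)) * (Y q - Y (q + 1)) := by
  rw [hX, hX]
  by_cases hq : P q <;> by_cases hq' : P (q + 1)
  · simp [hq, hq']
  · simpa [hq, hq', hY _ hq'] using hsY q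
  · simpa [hq, hq', hY _ hq] using hsY (q + 1)
  · simp [hq, hq']

lemma exists_bounds_of_ne_zero {α M : Type*} [Fintype α] [LinearOrder α] [Zero M] {v : α → M}
    (hv : v ≠ 0) : ∃ i j, v i ≠ 0 ∧ v j ≠ 0 ∧ ∀ k, v k ≠ 0 → i ≤ k ∧ k ≤ j := by
  classical
  set S := univ.filter fun k => v k ≠ 0
  have hS : S.Nonempty := by
    obtain ⟨k, hk⟩ := Function.ne_iff.1 hv
    exact ⟨k, by simpa [S] using hk⟩
  refine ⟨S.min' hS, S.max' hS, (mem_filter.1 (S.min'_mem hS)).2, (mem_filter.1 (S.max'_mem hS)).2,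
    fun k hk => ⟨S.min'_le k ?_, S.le_max' k ?_⟩⟩ <;> simpa [S] using hk

variable {n : ℕ}

def IsReducible (a v : Fin n → ℤ) : Prop :=
  ∃ x y : Fin n → ℤ, x ≠ 0 ∧ y ≠ 0 ∧ v = x + y ∧ 0 ≤ linForm a x y

def intervalVec (i j : Fin n) (ε : ℤ) : Fin n → ℤ :=
  fun k => if i ≤ k ∧ k ≤ j then ε else 0

/-- `pad x` is the sequence `0, x 0, …, x (n - 1), 0, 0, …`. -/
def pad (x : Fin n → ℤ) : ℕ → ℤ
  | 0 => 0
  | k + 1 => if h : k < n then x ⟨k, h⟩ else 0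

@[simp] lemma pad_zero (x : Fin n → ℤ) : pad x 0 = 0 := rfl

@[simp] lemma pad_succ (x : Fin n → ℤ) (k : Fin n) : pad x (k + 1) = x k := by
  simp [pad]

lemma pad_of_lt (x : Fin n → ℤ) {p : ℕ} (hp : n < p) : pad x p = 0 := by
  obtain ⟨k, rfl⟩ : ∃ k, p = k + 1 := ⟨p - 1, by omega⟩
  simp [pad, show ¬ k < n by omega]

lemma pad_cases (p : ℕ) : (∃ k : Fin n, (k : ℕ) + 1 = p) ∨ p = 0 ∨ n < p := by
  rcases p with _ | k
  · simp
  · by_cases hk : k < n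
    · exact Or.inl ⟨⟨k, hk⟩, rfl⟩
    · omega

lemma pad_add (x y : Fin n → ℤ) (p : ℕ) : pad (x + y) p = pad x p + pad y p := by
  rcases pad_cases (n := n) p with ⟨k, rfl⟩ | rfl | hp <;> simp [pad_of_lt, *]

lemma pad_ite (P : ℕ → Prop) [DecidablePred P] (x : Fin n → ℤ) (p : ℕ) :
    pad (fun k => if P k then x k else 0) p = if P (p - 1) then pad x p else 0 := by
  rcases pad_cases (n := n) p with ⟨k, rfl⟩ | rfl | hp <;> simp [pad_of_lt, *]

lemma pad_intervalVec (i j : Fin n) (ε : ℤ) (p : ℕ) :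
    pad (intervalVec i j ε) p = if (i : ℕ) < p ∧ p ≤ j + 1 then ε else 0 := by
  rcases pad_cases (n := n) p with ⟨k, rfl⟩ | rfl | hp
  · rw [pad_succ]
    exact if_congr (by simp only [Fin.le_def]; omega) rfl rfl
  · simp
  · rw [pad_of_lt _ hp, if_neg (by omega)]

lemma sum_ite_val_succ_eq_pad (x : Fin n → ℤ) (p : ℕ) :
    ∑ k : Fin n, (if (k : ℕ) + 1 = p then x k else 0) = pad x p := by
  rcases pad_cases (n := n) p with ⟨k, rfl⟩ | rfl | hp
  · rw [sum_eq_single k (fun l _ hl => if_neg (by omega)) (by simp)]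
    simp
  · simp
  · rw [pad_of_lt _ hp]
    exact sum_eq_zero fun k _ => if_neg (by omega)

theorem linForm_eq_sum_add_sum (a x y : Fin n → ℤ) :
    linForm a x y = ∑ k, (a k - 2) * (x k * y k) +
      ∑ p ∈ range (n + 1), (pad x p - pad x (p + 1)) * (pad y p - pad y (p + 1)) := by
  -- row `i` has the entries `aᵢ`, `-1`, `-1` at columns `i`, `i - 1`, `i + 1`
  have hentry : ∀ i j : Fin n, linMat a i j * x i * y j =
      x i * ((if j = i then a i * y j else 0) - (if (j : ℕ) + 1 = i then y j else 0) -
        (if (j : ℕ) + 1 = i + 2 then y j else 0)) := by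
    intro i j
    simp only [linMat, Fin.ext_iff]
    split_ifs <;> first | omega | ring
  have hrows : linForm a x y = ∑ k ∈ range n,
      pad x (k + 1) * (pad a (k + 1) * pad y (k + 1) - pad y k - pad y (k + 2)) := by
    rw [← Fin.sum_univ_eq_sum_range
      (fun k => pad x (k + 1) * (pad a (k + 1) * pad y (k + 1) - pad y k - pad y (k + 2)))]
    simp only [linForm, hentry, ← mul_sum, sum_sub_distrib, sum_ite_eq', mem_univ, if_true,
      sum_ite_val_succ_eq_pad, pad_succ]
  rw [hrows, sum_range_mul_tridiagonal_eq (pad a) (pad x) (pad y) n rfl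
      (pad_of_lt x n.lt_succ_self) (pad_of_lt y n.lt_succ_self),
    ← Fin.sum_univ_eq_sum_range
      (fun k => (pad a (k + 1) - 2) * (pad x (k + 1) * pad y (k + 1)))]
  simp only [pad_succ]

lemma two_le_sum_abs_sub_pad {x : Fin n → ℤ} (hx : x ≠ 0) :
    2 ≤ ∑ p ∈ range (n + 1), |pad x p - pad x (p + 1)| := by
  obtain ⟨k, hk⟩ := Function.ne_iff.1 hx
  have htv := two_mul_abs_le_sum_abs_sub (X := pad x) (m := k + 1) rfl
    (pad_of_lt x n.lt_succ_self) (by omega)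
  rw [pad_succ] at htv
  linarith [Int.one_le_abs hk]

lemma abs_sub_pad_intervalVec_le_one (i j : Fin n) {ε : ℤ} (hε : |ε| ≤ 1) (p : ℕ) :
    |pad (intervalVec i j ε) p - pad (intervalVec i j ε) (p + 1)| ≤ 1 := by
  rw [pad_intervalVec, pad_intervalVec]
  split_ifs <;> simp [hε]

lemma sum_abs_sub_pad_intervalVec_le (i j : Fin n) {ε : ℤ} (hε : |ε| ≤ 1) :
    ∑ p ∈ range (n + 1), |pad (intervalVec i j ε) p - pad (intervalVec i j ε) (p + 1)| ≤ 2 := by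
  have hjump : ∀ p, |pad (intervalVec i j ε) p - pad (intervalVec i j ε) (p + 1)| ≤
      (if p = i then 1 else 0) + (if p = j + 1 then 1 else 0) := by
    intro p
    rw [pad_intervalVec, pad_intervalVec]
    split_ifs <;> first | omega | simp [hε]
  calc _ ≤ ∑ p ∈ range (n + 1), ((if p = i then 1 else 0) + (if p = j + 1 then 1 else 0)) :=
        sum_le_sum fun p _ => hjump p
    _ ≤ 2 := by
      rw [sum_add_distrib, sum_ite_eq', sum_ite_eq']
      split_ifs <;> norm_num

theorem linForm_neg_of_add_eq_intervalVec {a : Fin n → ℤ} (ha : ∀ k, 2 ≤ a k) {i j : Fin n}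
    {ε : ℤ} (hε : |ε| ≤ 1) {x y : Fin n → ℤ} (hx : x ≠ 0) (hy : y ≠ 0)
    (hxy : x + y = intervalVec i j ε) : linForm a x y < 0 := by
  set V := pad (intervalVec i j ε)
  have hjump : ∀ p,
      (pad x p - pad x (p + 1)) + (pad y p - pad y (p + 1)) = V p - V (p + 1) := by
    intro p
    simp only [V, ← hxy, pad_add]
    ring
  have hdiag : ∑ k, (a k - 2) * (x k * y k) ≤ 0 := sum_nonpos fun k _ =>
    mul_nonpos_of_nonneg_of_nonpos (by linarith [ha k]) <| mul_nonpos_of_abs_add_le_one <| by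
      rw [← Pi.add_apply x y, hxy, intervalVec]
      split_ifs <;> simp [hε]
  have hedge : ∀ p, (pad x p - pad x (p + 1)) * (pad y p - pad y (p + 1)) ≤ 0 := fun p =>
    mul_nonpos_of_abs_add_le_one (by rw [hjump]; exact abs_sub_pad_intervalVec_le_one i j hε p)
  by_contra! hform
  rw [linForm_eq_sum_add_sum] at hform
  have hedge0 := (sum_eq_zero_iff_of_nonpos fun p _ => hedge p).1
    (le_antisymm (sum_nonpos fun p _ => hedge p) (by linarith))
  have htv : ∑ p ∈ range (n + 1), |pad x p - pad x (p + 1)| +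
      ∑ p ∈ range (n + 1), |pad y p - pad y (p + 1)| ≤
        ∑ p ∈ range (n + 1), |V p - V (p + 1)| := by
    rw [← sum_add_distrib]
    refine sum_le_sum fun p hp => ?_
    rw [← hjump]
    rcases mul_eq_zero.1 (hedge0 p hp) with h | h <;> simp [h]
  linarith [two_le_sum_abs_sub_pad hx, two_le_sum_abs_sub_pad hy,
    sum_abs_sub_pad_intervalVec_le i j hε]

lemma linForm_split (a v : Fin n → ℤ) (p : ℕ) :
    linForm a (fun k => if (k : ℕ) < p then v k else 0)
      (fun k => if p ≤ (k : ℕ) then v k else 0) = -(pad v p * pad v (p + 1)) := by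
  rw [linForm_eq_sum_add_sum, sum_eq_zero fun k _ => by split_ifs <;> omega, zero_add]
  simp only [pad_ite (· < p) v, pad_ite (p ≤ ·) v]
  rw [sum_eq_single p]
  · rcases p with _ | p
    · simp
    · split_ifs <;> first | omega | ring
  · intro q _ hq
    split_ifs <;> omega
  · intro hp
    rw [pad_of_lt v (by simpa using hp)]
    simp

lemma isReducible_of_pad_mul_nonpos {a v : Fin n → ℤ} {i j : Fin n} (hvi : v i ≠ 0)
    (hvj : v j ≠ 0) {p : ℕ} (hip : (i : ℕ) < p) (hpj : p ≤ j)
    (hp : pad v p * pad v (p + 1) ≤ 0) : IsReducible a v := by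
  refine ⟨fun k => if (k : ℕ) < p then v k else 0, fun k => if p ≤ (k : ℕ) then v k else 0,
    Function.ne_iff.2 ⟨i, by simpa [hip] using hvi⟩,
    Function.ne_iff.2 ⟨j, by simpa [hpj] using hvj⟩, ?_, by rw [linForm_split]; linarith⟩
  funext k
  simp only [Pi.add_apply]
  split_ifs <;> omega

lemma linForm_intervalVec_nonneg {a : Fin n → ℤ} (ha : ∀ k, 2 ≤ a k) (i j : Fin n) (s : ℤ)
    {y : Fin n → ℤ} (hsy : ∀ k, 0 ≤ s * y k) (hy : ∀ k, ¬ (i ≤ k ∧ k ≤ j) → y k = 0) :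
    0 ≤ linForm a (intervalVec i j s) y := by
  rw [linForm_eq_sum_add_sum]
  refine add_nonneg (sum_nonneg fun k _ => mul_nonneg (by linarith [ha k]) ?_)
    (sum_nonneg fun p _ =>
      sub_mul_sub_nonneg_of_indicator (pad_intervalVec i j s) (fun q hq => ?_) (fun q => ?_) p)
  · simp only [intervalVec]
    split_ifs
    exacts [hsy k, le_of_eq (zero_mul _).symm]
  · rcases pad_cases (n := n) q with ⟨k, rfl⟩ | rfl | hq'
    · rw [pad_succ]
      exact hy k (by rw [Fin.le_def, Fin.le_def]; omega)
    · rfl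
    · exact pad_of_lt y hq'
  · rcases pad_cases (n := n) q with ⟨k, rfl⟩ | rfl | hq'
    · simpa using hsy k
    · simp
    · simp [pad_of_lt y hq']

lemma isReducible_of_same_sign {a v : Fin n → ℤ} (ha : ∀ k, 2 ≤ a k) {i j : Fin n}
    (hij : i ≤ j) {s : ℤ} (hs : s = 1 ∨ s = -1) (hout : ∀ k, ¬ (i ≤ k ∧ k ≤ j) → v k = 0)
    (hsign : ∀ k, i ≤ k → k ≤ j → 0 < s * v k) (hne : v ≠ intervalVec i j s) :
    IsReducible a v := by
  refine ⟨intervalVec i j s, v - intervalVec i j s, Function.ne_iff.2 ⟨i, ?_⟩, sub_ne_zero.2 hne,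
    (add_sub_cancel _ _).symm, linForm_intervalVec_nonneg ha i j s (fun k => ?_) (fun k hk => ?_)⟩
  · rcases hs with rfl | rfl <;> simp [intervalVec, hij]
  · simp only [Pi.sub_apply, intervalVec]
    split_ifs with hk
    · have := hsign k hk.1 hk.2
      rcases hs with rfl | rfl <;> linarith
    · simp [hout k hk]
  · simp [intervalVec, hk, hout k hk]

theorem isReducible_of_ne_intervalVec {a v : Fin n → ℤ} (ha : ∀ k, 2 ≤ a k) (hv : v ≠ 0)
    (hno : ∀ i j : Fin n, ∀ s : ℤ, i ≤ j → (s = 1 ∨ s = -1) → v ≠ intervalVec i j s) :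
    IsReducible a v := by
  obtain ⟨i, j, hvi, hvj, hsupp⟩ := exists_bounds_of_ne_zero hv
  by_cases hcut : ∃ p, (i : ℕ) < p ∧ p ≤ j ∧ pad v p * pad v (p + 1) ≤ 0
  · obtain ⟨p, hip, hpj, hp⟩ := hcut
    exact isReducible_of_pad_mul_nonpos hvi hvj hip hpj hp
  push Not at hcut
  have hs : (v i).sign = 1 ∨ (v i).sign = -1 := by
    rcases lt_or_gt_of_ne hvi with h | h
    exacts [Or.inr (Int.sign_eq_neg_one_of_neg h), Or.inl (Int.sign_eq_one_of_pos h)]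
  have hsign : ∀ k, i ≤ k → k ≤ j → 0 < (v i).sign * v k := by
    intro k hik hkj
    have hpos : 0 < v i * v k := by
      simpa using pos_mul_of_pos_mul_succ (f := pad v) (i := i + 1) (j := j + 1)
        (fun p h1 h2 => hcut p (by omega) (by omega)) (by simpa using hvi)
        (m := k + 1) (by rw [Fin.le_def] at hik; omega) (by rw [Fin.le_def] at hkj; omega)
    have e : v i * v k = |v i| * ((v i).sign * v k) := by
      conv_lhs => rw [← Int.sign_mul_abs (v i)]
      ring
    exact pos_of_mul_pos_right (e ▸ hpos) (abs_nonneg _)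
  have hij := (hsupp i hvi).2
  exact isReducible_of_same_sign ha hij hs (fun k hk => not_not.1 ((hsupp k).mt hk)) hsign
    (hno i j _ hij hs)

end LinearLattice

theorem linear_lattice_irreducible_general (n : ℕ) (a : Fin n → ℤ)
    (ha : ∀ i, 2 ≤ a i) (v : Fin n → ℤ) (hv : v ≠ 0) :
    (¬ ∃ x y : Fin n → ℤ, x ≠ 0 ∧ y ≠ 0 ∧ v = x + y ∧ 0 ≤ linForm a x y) ↔
    ∃ (i j : Fin n) (ε : ℤ), i ≤ j ∧ (ε = 1 ∨ ε = -1) ∧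
      v = fun k => if i ≤ k ∧ k ≤ j then ε else 0 := by
  constructor
  · intro hirr
    by_contra hinterval
    exact hirr <| LinearLattice.isReducible_of_ne_intervalVec ha hv
      fun i j s hij hs h => hinterval ⟨i, j, s, hij, hs, h⟩
  · rintro ⟨i, j, ε, -, hε, rfl⟩ ⟨x, y, hx, hy, hxy, hform⟩
    have hε' : |ε| ≤ 1 := by rcases hε with rfl | rfl <;> norm_num
    exact (LinearLattice.linForm_neg_of_add_eq_intervalVec ha hε' hx hy hxy.symm).not_ge hform

/-- **Irreducible elements of a linear lattice.** A nonzero vector of the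
linear lattice `Λ(a₁,…,aₙ)` (all `aᵢ ≥ 2`) is irreducible iff it is `±` the
indicator vector of an interval of consecutive indices. -/
theorem linear_lattice_irreducible (n : ℕ) (hn : 1 ≤ n) (a : Fin n → ℤ)
    (ha : ∀ i, 2 ≤ a i) (v : Fin n → ℤ) (hv : v ≠ 0) :
    (¬ ∃ x y : Fin n → ℤ, x ≠ 0 ∧ y ≠ 0 ∧ v = x + y ∧ 0 ≤ linForm a x y) ↔
    ∃ (i j : Fin n) (ε : ℤ), i ≤ j ∧ (ε = 1 ∨ ε = -1) ∧
      v = fun k => if i ≤ k ∧ k ≤ j then ε else 0 :=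
  linear_lattice_irreducible_general n a ha v hv
end

section
/- Let T_1, …, T_k be pairwise distinct intervals in {1, …, n} whose indicator vectors in ℤ^n are linearly independent, and let G be the simple graph on {T_1,…,T_k} with an edge between two intervals whenever they abut. Then for every cycle C in G there exists an index j such that every interval T in the vertex set of C has min T = j + 1 or max T = j; in particular, the vertex set of C induces a complete subgraph of G. -/
/-!
Write `P j` for the indicator vector of `{1, …, j}`. The interval `{l, …, h}` has indicator
`P h - P (l - 1)`, so it behaves like an edge between the cuts `l - 1` and `h`, and two intervals
abut exactly when they have a cut in common. Going once around a cycle and choosing at each step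
a cut shared by the two intervals, the differences `P u - P z` between consecutive chosen cuts
telescope to zero. This is an integer combination of the (distinct) indicators of the cycle in
which an interval gets a nonzero coefficient exactly when the chosen cut changes there; by linear
independence the chosen cut `j` never changes, so every interval of the cycle has `j` as a cut.
-/

/-- The abutment graph of a family of intervals `T a = {lo a, …, hi a}`:
two distinct intervals are adjacent iff they abut, i.e. they share a common
endpoint or are consecutive. -/
def intervalGraph {k : ℕ} (lo hi : Fin k → ℕ) : SimpleGraph (Fin k) where
  Adj a b := a ≠ b ∧
    (lo a = lo b ∨ hi a = hi b ∨ lo b = hi a + 1 ∨ lo a = hi b + 1)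
  symm := ⟨fun a b h => ⟨h.1.symm, by have h2 := h.2; omega⟩⟩
  loopless := ⟨fun a h => h.1 rfl⟩

namespace IntervalCycle

def intervalIndicator (n l h : ℕ) : Fin n → ℤ :=
  fun i => if l ≤ (i : ℕ) + 1 ∧ (i : ℕ) + 1 ≤ h then 1 else 0

def prefixIndicator (n j : ℕ) : Fin n → ℤ :=
  fun i => if (i : ℕ) + 1 ≤ j then 1 else 0

/-- The cut `j` lies between the positions `j` and `j + 1`; it is a cut of `{l, …, h}` if it
borders the interval on the left or on the right. -/
def IsCut (l h j : ℕ) : Prop := l = j + 1 ∨ h = j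

theorem intervalIndicator_succ {n j h : ℕ} (hjh : j ≤ h) :
    intervalIndicator n (j + 1) h = prefixIndicator n h - prefixIndicator n j := by
  funext i
  simp only [intervalIndicator, prefixIndicator, Pi.sub_apply]
  split_ifs <;> omega

theorem exists_smul_intervalIndicator_eq_sub {n l h z u : ℕ} (hlh : l ≤ h + 1)
    (hz : IsCut l h z) (hu : IsCut l h u) :
    ∃ σ : ℤ, σ • intervalIndicator n l h = prefixIndicator n u - prefixIndicator n z ∧
      (σ = 0 → z = u) := by
  by_cases hzu : z = u
  · exact ⟨0, by rw [zero_smul, hzu, sub_self], fun _ => hzu⟩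
  rcases hz with rfl | rfl <;> rcases hu with hu | rfl
  · omega
  · exact ⟨1, by rw [one_smul, intervalIndicator_succ (by omega)], by simp⟩
  · subst hu
    exact ⟨-1, by rw [neg_one_smul, intervalIndicator_succ (by omega), neg_sub], by simp⟩
  · exact absurd rfl hzu

section Walks

variable {n k : ℕ} {lo hi : Fin k → ℕ}

theorem exists_isCut_of_adj (hlo : ∀ a, 1 ≤ lo a) {a b : Fin k}
    (hab : (intervalGraph lo hi).Adj a b) :
    ∃ j, IsCut (lo a) (hi a) j ∧ IsCut (lo b) (hi b) j := by
  have := hlo a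
  have := hlo b
  rcases hab.2 with h | h | h | h
  · exact ⟨lo a - 1, Or.inl (by omega), Or.inl (by omega)⟩
  · exact ⟨hi a, Or.inr rfl, Or.inr h.symm⟩
  · exact ⟨hi a, Or.inr rfl, Or.inl h⟩
  · exact ⟨hi b, Or.inl h, Or.inr rfl⟩

theorem intervalGraph_adj_of_isCut {a b : Fin k} {j : ℕ} (ha : IsCut (lo a) (hi a) j)
    (hb : IsCut (lo b) (hi b) j) (hab : a ≠ b) : (intervalGraph lo hi).Adj a b := by
  unfold IsCut at ha hb
  exact ⟨hab, by omega⟩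

theorem exists_sum_smul_eq_of_nodup (hlo : ∀ a, 1 ≤ lo a) (hle : ∀ a, lo a ≤ hi a + 1)
    {x y : Fin k} (w : (intervalGraph lo hi).Walk x y) (hw : w.support.Nodup) {z u : ℕ}
    (hz : IsCut (lo x) (hi x) z) (hu : IsCut (lo y) (hi y) u) :
    ∃ ε : Fin k → ℤ,
      ∑ a, ε a • intervalIndicator n (lo a) (hi a) = prefixIndicator n u - prefixIndicator n z ∧
      (∀ a ∉ w.support, ε a = 0) ∧ (ε = 0 → ∀ b ∈ w.support, IsCut (lo b) (hi b) z) := by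
  induction w generalizing z with
  | nil =>
    obtain ⟨σ, hσ, -⟩ := exists_smul_intervalIndicator_eq_sub (n := n) (hle _) hz hu
    refine ⟨Pi.single _ σ, by simpa [Pi.single_apply] using hσ, ?_, ?_⟩
    · intro a ha
      simp_all
    · intro _ b hb
      simp_all
  | @cons x x' y hxx' p ih =>
    rw [SimpleGraph.Walk.support_cons, List.nodup_cons] at hw
    obtain ⟨j, hjx, hjx'⟩ := exists_isCut_of_adj hlo hxx'
    obtain ⟨ε, hε, hεsupp, hεzero⟩ := ih hw.2 hjx' hu
    obtain ⟨σ, hσ, hσzero⟩ := exists_smul_intervalIndicator_eq_sub (n := n) (hle x) hz hjx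
    have hεx : ε x = 0 := hεsupp x hw.1
    refine ⟨ε + Pi.single x σ, ?_, ?_, ?_⟩
    · simp only [Pi.add_apply, add_smul, Finset.sum_add_distrib, hε, Pi.single_apply, ite_smul,
        zero_smul, Finset.sum_ite_eq', Finset.mem_univ, if_true, hσ]
      abel
    · intro a ha
      rw [SimpleGraph.Walk.support_cons, List.mem_cons, not_or] at ha
      simp [hεsupp a ha.2, ha.1]
    · intro h0
      have hσ0 : σ = 0 := by simpa [hεx] using congrFun h0 x
      obtain rfl := hσzero hσ0
      rw [hσ0, Pi.single_zero, add_zero] at h0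
      intro b hb
      rw [SimpleGraph.Walk.support_cons, List.mem_cons] at hb
      rcases hb with rfl | hb
      exacts [hz, hεzero h0 b hb]

theorem exists_isCut_of_isCycle (hlo : ∀ a, 1 ≤ lo a) (hle : ∀ a, lo a ≤ hi a + 1)
    (hli : LinearIndependent ℤ (fun a => intervalIndicator n (lo a) (hi a)))
    {v : Fin k} {c : (intervalGraph lo hi).Walk v v} (hc : c.IsCycle) :
    ∃ j, ∀ b ∈ c.support, IsCut (lo b) (hi b) j := by
  cases c with
  | nil => exact absurd rfl hc.ne_nil
  | cons hvx q =>
    obtain ⟨j, hjv, hjx⟩ := exists_isCut_of_adj hlo hvx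
    have hq : q.support.Nodup := by simpa using hc.support_nodup
    obtain ⟨ε, hε, -, hεzero⟩ := exists_sum_smul_eq_of_nodup hlo hle q hq hjx hjv
    have hε0 : ε = 0 := funext (Fintype.linearIndependent_iff.mp hli ε (by rw [hε, sub_self]))
    refine ⟨j, fun b hb => ?_⟩
    rw [SimpleGraph.Walk.support_cons, List.mem_cons] at hb
    rcases hb with rfl | hb
    exacts [hjv, hεzero hε0 b hb]

end Walks

end IntervalCycle

open IntervalCycle in
theorem interval_cycle_general (n k : ℕ) (lo hi : Fin k → ℕ)
    (hlo : ∀ a, 1 ≤ lo a) (hle : ∀ a, lo a ≤ hi a)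
    (hli : LinearIndependent ℤ (fun a : Fin k =>
      (fun i : Fin n => if lo a ≤ (i : ℕ) + 1 ∧ (i : ℕ) + 1 ≤ hi a then (1 : ℤ) else 0)))
    (v : Fin k) (c : (intervalGraph lo hi).Walk v v) (hc : c.IsCycle) :
    (∃ j : ℕ, ∀ b ∈ c.support, lo b = j + 1 ∨ hi b = j) ∧
    (∀ a ∈ c.support, ∀ b ∈ c.support, a ≠ b → (intervalGraph lo hi).Adj a b) := by
  obtain ⟨j, hj⟩ := exists_isCut_of_isCycle (n := n) hlo (fun a => (hle a).trans (Nat.le_succ _))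
    hli hc
  exact ⟨⟨j, hj⟩, fun a ha b hb hab => intervalGraph_adj_of_isCut (hj a ha) (hj b hb) hab⟩

/-- **Cycles of abutting intervals.** Let `T₁,…,T_k` be pairwise distinct
intervals in `{1,…,n}` whose indicator vectors in `ℤⁿ` are linearly
independent.  Then for every cycle in the abutment graph there is an index `j`
such that every interval in the cycle has left endpoint `j+1` or right
endpoint `j`; in particular the vertex set of the cycle induces a complete
subgraph. -/
theorem interval_cycle (n k : ℕ) (lo hi : Fin k → ℕ)
    (hlo : ∀ a, 1 ≤ lo a) (hhi : ∀ a, hi a ≤ n) (hle : ∀ a, lo a ≤ hi a)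
    (hdist : ∀ a b : Fin k, a ≠ b → (lo a, hi a) ≠ (lo b, hi b))
    (hli : LinearIndependent ℤ (fun a : Fin k =>
      (fun i : Fin n => if lo a ≤ (i : ℕ) + 1 ∧ (i : ℕ) + 1 ≤ hi a then (1 : ℤ) else 0)))
    (v : Fin k) (c : (intervalGraph lo hi).Walk v v) (hc : c.IsCycle) :
    (∃ j : ℕ, ∀ b ∈ c.support, lo b = j + 1 ∨ hi b = j) ∧
    (∀ a ∈ c.support, ∀ b ∈ c.support, a ≠ b → (intervalGraph lo hi).Adj a b) :=
  interval_cycle_general n k lo hi hlo hle hli v c hc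
end

section
/- Let σ = (σ_0, …, σ_n) ∈ ℤ^{n+1} be a changemaker and let z = Σ_{i=0}^n z_i e_i ∈ ℤ^{n+1} satisfy ⟨z, σ⟩ = 0 and ⟨z, z⟩ ≥ 3. Suppose there is exactly one index j with z_j < 0, and z_j = −1. Then j = max{ i : z_i ≠ 0 }; that is, every index i with z_i ≠ 0 satisfies i ≤ j. -/
/-!
Suppose `z_i ≠ 0` for some `i > j`, so `z_i ≥ 1`. Raising `z_j` from `-1` to `0` gives a
nonnegative vector `w` with `⟨w, σ⟩ = σ_j ≤ σ_i ≤ w_i σ_i`. As all `σ_k` are positive, this forces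
`w = e_i`, so `z = e_i - e_j` has norm `2 < 3`.
-/

/-- A changemaker vector: `1 = σ_0 ≤ σ_1 ≤ ⋯ ≤ σ_n` and
`σ_i ≤ σ_0 + ⋯ + σ_{i-1} + 1` for all `1 ≤ i ≤ n`. -/
def IsChangemaker {n : ℕ} (σ : Fin (n + 1) → ℤ) : Prop :=
  σ 0 = 1 ∧ Monotone σ ∧
    ∀ i : Fin (n + 1), i ≠ 0 → σ i ≤ (∑ j ∈ Finset.Iio i, σ j) + 1

theorem IsChangemaker.pos {n : ℕ} {σ : Fin (n + 1) → ℤ} (hσ : IsChangemaker σ)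
    (k : Fin (n + 1)) : 0 < σ k :=
  hσ.1 ▸ hσ.2.1 (Fin.zero_le k) |>.trans_lt' one_pos

theorem eq_single_of_sum_mul_le {ι : Type*} [Fintype ι] [DecidableEq ι] {w σ : ι → ℤ}
    (hw : 0 ≤ w) (hσ : ∀ k, 0 < σ k) {i : ι} (hwi : 1 ≤ w i)
    (hsum : ∑ k, w k * σ k ≤ σ i) : w = Pi.single i 1 := by
  have hterm : ∀ k, 0 ≤ w k * σ k := fun k => mul_nonneg (hw k) (hσ k).le
  have hσi : σ i ≤ w i * σ i := le_mul_of_one_le_left (hσ i).le hwi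
  rw [← Finset.add_sum_erase _ _ (Finset.mem_univ i)] at hsum
  have hrest : ∑ k ∈ Finset.univ.erase i, w k * σ k = 0 :=
    le_antisymm (by linarith) (Finset.sum_nonneg fun k _ => hterm k)
  have hwi_eq : w i = 1 :=
    le_antisymm (le_of_mul_le_mul_right (by linarith) (hσ i)) hwi
  funext k
  rcases eq_or_ne k i with rfl | hki
  · simp [hwi_eq]
  · have hk := (Finset.sum_eq_zero_iff_of_nonneg fun k _ => hterm k).mp hrest k
      (Finset.mem_erase.mpr ⟨hki, Finset.mem_univ k⟩)
    simpa [Pi.single_apply, hki, (hσ k).ne'] using hk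

theorem sum_mul_self_single_sub_single {ι : Type*} [Fintype ι] [DecidableEq ι] {i j : ι}
    (hij : i ≠ j) :
    ∑ k, (Pi.single i 1 - Pi.single j 1 : ι → ℤ) k * (Pi.single i 1 - Pi.single j 1 : ι → ℤ) k
      = 2 := by
  simp [Pi.single_apply, mul_sub, Finset.sum_sub_distrib, hij, hij.symm]

/-- If `z` is orthogonal to a changemaker `σ`, has norm at least `3`, and has
exactly one negative coordinate `z_j = -1`, then `j` is the maximum of the
support of `z`. -/
theorem changemaker_support_max (n : ℕ) (σ : Fin (n + 1) → ℤ)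
    (hσ : IsChangemaker σ) (z : Fin (n + 1) → ℤ)
    (horth : ∑ i, z i * σ i = 0) (hnorm : 3 ≤ ∑ i, z i * z i)
    (j : Fin (n + 1)) (hneg : ∀ i, z i < 0 ↔ i = j) (hzj : z j = -1) :
    ∀ i, z i ≠ 0 → i ≤ j := by
  intro i hzi
  by_contra! hji
  have hij : i ≠ j := hji.ne'
  set w := z + Pi.single j 1 with hw_def
  have hw : 0 ≤ w := by
    intro k
    rcases eq_or_ne k j with rfl | hkj
    · simp [w, hzj]
    · simpa [w, hkj] using not_lt.mp (mt (hneg k).mp hkj)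
  have hwi : 1 ≤ w i := by
    have : 0 ≤ z i := not_lt.mp (mt (hneg i).mp hij)
    simpa [w, hij] using Int.add_one_le_iff.mpr (lt_of_le_of_ne this hzi.symm)
  have hsum : ∑ k, w k * σ k = σ j := by
    simp [w, add_mul, Finset.sum_add_distrib, horth, Pi.single_apply]
  have hw_eq := eq_single_of_sum_mul_le hw hσ.pos hwi (hsum.trans_le (hσ.2.1 hji.le))
  have hz : z = Pi.single i 1 - Pi.single j 1 := by
    rw [← hw_eq, hw_def, add_sub_cancel_right]
  rw [hz, sum_mul_self_single_sub_single hij] at hnorm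
  norm_num at hnorm
end

section
/- Let σ = (σ_0, …, σ_n) ∈ ℤ^{n+1} be a changemaker, L = (σ)^⊥, and 1 ≤ j ≤ n. Suppose v ∈ L and either (a) v = −e_j + Σ_{i∈A} e_i for some subset A ⊆ {0, …, j−1}, or (b) v = −e_j + 2e_0 + e_1 + ⋯ + e_{j−1}. Then v is irreducible in L. -/
/-- `v` is irreducible in the changemaker lattice `L = (σ)^⊥`: it is not the
sum of two nonzero elements of `L` pairing non-negatively. -/
def IsCMIrreducible {n : ℕ} (σ v : Fin (n + 1) → ℤ) : Prop :=
  ¬ ∃ x y : Fin (n + 1) → ℤ, x ≠ 0 ∧ y ≠ 0 ∧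
    (∑ i, x i * σ i = 0) ∧ (∑ i, y i * σ i = 0) ∧
    v = x + y ∧ 0 ≤ ∑ i, x i * y i

open Finset

namespace Int

lemma mul_nonpos_of_abs_add_le_one {a b : ℤ} (h : |a + b| ≤ 1) : a * b ≤ 0 := by
  rw [abs_le] at h
  nlinarith [sq_nonneg (a - b)]

lemma mul_le_one_of_add_le_two {a b : ℤ} (h₀ : 0 ≤ a + b) (h₂ : a + b ≤ 2) : a * b ≤ 1 := by
  nlinarith [sq_nonneg (a - b)]

lemma mul_eq_zero_of_add_eq_neg_one {a b : ℤ} (hab : a + b = -1) (h : -1 ≤ a * b) :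
    a * b = 0 := by
  obtain rfl : b = -1 - a := by omega
  obtain ⟨h₁, h₂⟩ : -1 ≤ a ∧ a ≤ 0 := by constructor <;> nlinarith
  interval_cases a <;> rfl

lemma nonneg_of_mul_nonneg_of_add_nonneg {a b : ℤ} (hab : 0 ≤ a * b) (h : 0 ≤ a + b) :
    0 ≤ a ∧ 0 ≤ b := by
  rcases nonneg_and_nonneg_or_nonpos_and_nonpos_of_mul_nonneg hab with h' | h'
  · exact h'
  · omega

end Int

lemma eq_zero_of_nonneg_of_sum_mul_eq_zero {ι : Type*} [Fintype ι] {σ z : ι → ℤ}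
    (hσ : ∀ i, 0 < σ i) (hz : ∀ i, 0 ≤ z i) (h : ∑ i, z i * σ i = 0) : z = 0 := by
  funext i
  have := (sum_eq_zero_iff_of_nonneg fun i _ ↦ mul_nonneg (hz i) (hσ i).le).mp h i (mem_univ i)
  simpa [(hσ i).ne'] using this

lemma sum_pos_of_nonneg_off_pair {ι M : Type*} [Fintype ι] [DecidableEq ι] [AddCommMonoid M]
    [PartialOrder M] [IsOrderedCancelAddMonoid M] {f : ι → M} {a b c : ι} (hab : a ≠ b)
    (hca : c ≠ a) (hcb : c ≠ b) (hf : ∀ k, k ≠ a → k ≠ b → 0 ≤ f k) (hpair : 0 ≤ f a + f b)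
    (hc : 0 < f c) : 0 < ∑ k, f k := by
  have hrest : f c ≤ ∑ k ∈ univ \ {a, b}, f k :=
    single_le_sum (fun k hk ↦ by simp at hk; exact hf k hk.1 hk.2) (by simp [hca, hcb])
  rw [← sum_sdiff (subset_univ {a, b}), sum_pair hab]
  exact add_pos_of_pos_of_nonneg (hc.trans_le hrest) hpair

/-- The coordinate pattern shared by the vectors `-e_j + Σ_{i ∈ A} e_i` and
`-e_j + 2e_0 + e_1 + ⋯ + e_{j-1}` that forces irreducibility. -/
structure IsStandardShape {n : ℕ} (σ v : Fin (n + 1) → ℤ) (j : Fin (n + 1)) : Prop where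
  apply_self : v j = -1
  nonneg : ∀ i, i ≠ j → 0 ≤ v i
  le_one : ∀ i, i ≠ 0 → v i ≤ 1
  apply_zero_le_two : v 0 ≤ 2
  le_of_apply_eq_zero : v 0 = 2 → ∀ m, m ≠ 0 → v m = 0 → σ j ≤ σ m

namespace IsStandardShape

variable {n : ℕ} {σ x y : Fin (n + 1) → ℤ} {j : Fin (n + 1)}

lemma of_finset (A : Finset (Fin (n + 1))) :
    IsStandardShape σ (fun k ↦ if k = j then -1 else if k ∈ A then 1 else 0) j where
  apply_self := if_pos rfl
  nonneg i hi := by simp only [if_neg hi]; split_ifs <;> norm_num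
  le_one _ _ := by split_ifs <;> norm_num
  apply_zero_le_two := by split_ifs <;> norm_num
  le_of_apply_eq_zero h := by split_ifs at h <;> norm_num at h

lemma tight (hσ : Monotone σ) :
    IsStandardShape σ
      (fun k ↦ if k = j then -1 else if k = 0 then 2 else if k < j then 1 else 0) j where
  apply_self := if_pos rfl
  nonneg i hi := by simp only [if_neg hi]; split_ifs <;> norm_num
  le_one i hi := by simp only [if_neg hi]; split_ifs <;> norm_num
  apply_zero_le_two := by split_ifs <;> norm_num
  le_of_apply_eq_zero _ m hm0 hm := by
    simp only [if_neg hm0] at hm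
    split_ifs at hm with _ hlt
    · exact absurd hm one_ne_zero
    · exact hσ (not_lt.mp hlt)

lemma mul_nonpos (h : IsStandardShape σ (x + y) j) {i : Fin (n + 1)} (hi : i ≠ 0) :
    x i * y i ≤ 0 := by
  apply Int.mul_nonpos_of_abs_add_le_one
  rw [abs_le]
  by_cases hij : i = j
  · have hv : x i + y i = -1 := hij ▸ h.apply_self
    rw [hv]; norm_num
  · have hv : 0 ≤ x i + y i := h.nonneg i hij
    exact ⟨by linarith, h.le_one i hi⟩

lemma apply_zero_mul_le_one (h : IsStandardShape σ (x + y) j) (hj : j ≠ 0) :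
    x 0 * y 0 ≤ 1 :=
  Int.mul_le_one_of_add_le_two (h.nonneg 0 hj.symm) h.apply_zero_le_two

lemma sum_mul_nonneg_of_zero_mem (h : IsStandardShape σ (x + y) j) (hdot : 0 ≤ ∑ i, x i * y i)
    {s : Finset (Fin (n + 1))} (hs : 0 ∈ s) : 0 ≤ ∑ i ∈ s, x i * y i :=
  hdot.trans <| sum_le_sum_of_subset_of_nonpos' (subset_univ s) fun _ _ his ↦
    h.mul_nonpos fun hi ↦ his (hi ▸ hs)

lemma apply_self_mul_eq_zero (h : IsStandardShape σ (x + y) j) (hj : j ≠ 0)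
    (hdot : 0 ≤ ∑ i, x i * y i) : x j * y j = 0 := by
  have hpair := h.sum_mul_nonneg_of_zero_mem hdot (s := {0, j}) (by simp)
  rw [sum_pair hj.symm] at hpair
  exact Int.mul_eq_zero_of_add_eq_neg_one h.apply_self
    (by linarith [h.apply_zero_mul_le_one hj])

lemma false_of_apply_self_eq_zero (h : IsStandardShape σ (x + y) j) (hσ : ∀ i, 0 < σ i)
    (hj : j ≠ 0) (hx : x ≠ 0) (hxL : ∑ i, x i * σ i = 0) (hyL : ∑ i, y i * σ i = 0)
    (hdot : 0 ≤ ∑ i, x i * y i) (hxj : x j = 0) : False := by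
  obtain ⟨i, hi⟩ : ∃ i, x i < 0 := by
    by_contra! hx'
    exact hx (eq_zero_of_nonneg_of_sum_mul_eq_zero hσ hx' hxL)
  have hij : i ≠ j := by rintro rfl; omega
  have hvi : 0 ≤ x i + y i := h.nonneg i hij
  have hpi : x i * y i < 0 := mul_neg_of_neg_of_pos hi (by linarith)
  have hi0 : i ≠ 0 := by
    rintro rfl
    have := h.sum_mul_nonneg_of_zero_mem hdot (s := {0}) (mem_singleton_self 0)
    rw [sum_singleton] at this
    linarith
  have hpair := h.sum_mul_nonneg_of_zero_mem hdot (s := {0, i}) (by simp)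
  rw [sum_pair hi0.symm] at hpair
  have hp0 : x 0 * y 0 = 1 := by linarith [h.apply_zero_mul_le_one hj]
  have hpi' : x i * y i = -1 := by linarith
  obtain ⟨hx0, hy0⟩ : x 0 = 1 ∧ y 0 = 1 := by
    have hv0 : 0 ≤ x 0 + y 0 := h.nonneg 0 hj.symm
    rcases Int.eq_one_or_neg_one_of_mul_eq_one' hp0 with h' | h' <;> omega
  obtain ⟨hxi, hyi⟩ : x i = -1 ∧ y i = 1 := by
    rcases Int.eq_one_or_neg_one_of_mul_eq_neg_one' hpi' with h' | h' <;> omega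
  have hσji : σ j ≤ σ i := h.le_of_apply_eq_zero (by simp [hx0, hy0]) i hi0
    (by simp [hxi, hyi])
  have hy : ∀ k, k ≠ i → k ≠ j → 0 ≤ y k * σ k := by
    intro k hki hkj
    refine mul_nonneg ?_ (hσ k).le
    by_cases hk0 : k = 0
    · rw [hk0, hy0]; exact zero_le_one
    have hsum := h.sum_mul_nonneg_of_zero_mem hdot (s := {0, i, k}) (by simp)
    rw [sum_insert (by simp [Ne.symm hi0, Ne.symm hk0]), sum_pair hki.symm, hp0, hpi'] at hsum
    exact (Int.nonneg_of_mul_nonneg_of_add_nonneg (by linarith) (h.nonneg k hkj)).2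
  have hyj : y j = -1 := by simpa [hxj] using h.apply_self
  have : 0 < ∑ k, y k * σ k :=
    sum_pos_of_nonneg_off_pair hij hi0.symm hj.symm hy (by rw [hyi, hyj]; linarith)
      (by rw [hy0, one_mul]; exact hσ 0)
  exact this.ne' hyL

lemma isCMIrreducible {v : Fin (n + 1) → ℤ} (h : IsStandardShape σ v j) (hσ : ∀ i, 0 < σ i)
    (hj : j ≠ 0) : IsCMIrreducible σ v := by
  rintro ⟨x, y, hx, hy, hxL, hyL, rfl, hdot⟩
  rcases mul_eq_zero.mp (h.apply_self_mul_eq_zero hj hdot) with hxj | hyj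
  · exact h.false_of_apply_self_eq_zero hσ hj hx hxL hyL hdot hxj
  · rw [add_comm] at h
    rw [sum_congr rfl fun i _ ↦ mul_comm (x i) (y i)] at hdot
    exact h.false_of_apply_self_eq_zero hσ hj hy hyL hxL hdot hyj

end IsStandardShape

theorem changemaker_standard_basis_irreducible_general (n : ℕ) (σ : Fin (n + 1) → ℤ)
    (hσ : IsChangemaker σ) (j : Fin (n + 1)) (hj : j ≠ 0)
    (v : Fin (n + 1) → ℤ)
    (hv : (∃ A : Finset (Fin (n + 1)), (∀ i ∈ A, i < j) ∧
            v = fun k => if k = j then -1 else if k ∈ A then 1 else 0) ∨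
          v = fun k => if k = j then -1 else if k = 0 then 2
                       else if k < j then 1 else 0) :
    IsCMIrreducible σ v := by
  obtain ⟨hσ0, hmono, -⟩ := hσ
  have hσpos : ∀ i, 0 < σ i := fun i ↦ by linarith [hmono (Fin.zero_le i)]
  refine fun hred ↦ IsStandardShape.isCMIrreducible ?_ hσpos hj hred
  rcases hv with ⟨A, -, rfl⟩ | rfl
  · exact .of_finset A
  · exact .tight hmono

/-- **Irreducibility of standard basis elements.** Let `σ` be a changemaker,
`L = (σ)^⊥`, and `1 ≤ j ≤ n`.  If `v ∈ L` has the form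
`v = -e_j + Σ_{i ∈ A} e_i` with `A ⊆ {0,…,j-1}`, or the tight form
`v = -e_j + 2e_0 + e_1 + ⋯ + e_{j-1}`, then `v` is irreducible in `L`. -/
theorem changemaker_standard_basis_irreducible (n : ℕ) (σ : Fin (n + 1) → ℤ)
    (hσ : IsChangemaker σ) (j : Fin (n + 1)) (hj : j ≠ 0)
    (v : Fin (n + 1) → ℤ) (hvL : ∑ i, v i * σ i = 0)
    (hv : (∃ A : Finset (Fin (n + 1)), (∀ i ∈ A, i < j) ∧
            v = fun k => if k = j then -1 else if k ∈ A then 1 else 0) ∨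
          v = fun k => if k = j then -1 else if k = 0 then 2
                       else if k < j then 1 else 0) :
    IsCMIrreducible σ v :=
  changemaker_standard_basis_irreducible_general n σ hσ j hj v hv
end

section
/- Let σ ∈ ℤ^{n+1} be a changemaker, L = (σ)^⊥, and suppose v_t = −e_t + 2e_0 + e_1 + ⋯ + e_{t−1} ∈ L (a tight vector). Then: (1) if j ≠ t and v_j = −e_j + 2e_0 + e_1 + ⋯ + e_{j−1} ∈ L, then v_j − v_t is irreducible in L; (2) if j > t and v_j = −e_j + e_{j−1} + e_t ∈ L, then v_j + v_t is irreducible in L; (3) if v_{t+1} = −e_{t+1} + e_t + e_{t−1} + ⋯ + e_0 ∈ L, then v_{t+1} − v_t is irreducible in L. -/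
/-- The standard basis vector `e_i` of `ℤ^{n+1}`. -/
def stdb {n : ℕ} (i : Fin (n + 1)) : Fin (n + 1) → ℤ :=
  fun k => if k = i then 1 else 0

/-- The tight vector `v_t = -e_t + 2e_0 + e_1 + ⋯ + e_{t-1}`. -/
def tightVec {n : ℕ} (t : Fin (n + 1)) : Fin (n + 1) → ℤ :=
  fun k => if k = t then -1 else if k = 0 then 2 else if k < t then 1 else 0

/-!
If `w = x + y` with `x, y ∈ L` nonzero and `⟨x, y⟩ ≥ 0`, then `z = x - y ∈ L` satisfies
`z ≡ w (mod 2)`, `|z|² = |w|² - 4⟨x, y⟩ ≤ |w|²` and `z ≠ ±w`. Each vector `w` in question has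
entries `±1` on a set `O`, a single entry `2` at some `p ∉ O` and zeros elsewhere, so parity and
the norm bound force `z` to be `±1` on `O` with at most one further nonzero entry
`z m ∈ {±2}`. Up to sign `z b = -1` at the entry `b ∈ O` for which `σ b` exceeds the sum of
`σ` over the rest of `O`, and then `⟨z, σ⟩ = 0` forces `z m = 2`. Subtracting `⟨w, σ⟩ = 0`
leaves the balance `∑_O (w - z) σ = 2 (σ m - σ p)`, and monotonicity of `σ` together with the
tightness relations pins down `m = p` and `z = w` on `O`, contradicting `z ≠ ±w`.
-/

open Finset

section SignedSupport

variable {ι : Type*}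

def IsSignedSupport (O : Finset ι) (m : ι) (z : ι → ℤ) : Prop :=
  (∀ i ∈ O, z i = 1 ∨ z i = -1) ∧ ∀ i ∉ O, i ≠ m → z i = 0

theorem IsSignedSupport.neg {O : Finset ι} {m : ι} {z : ι → ℤ} (hz : IsSignedSupport O m z) :
    IsSignedSupport O m (-z) :=
  ⟨fun i hi => by rcases hz.1 i hi with h | h <;> simp [h],
    fun i hi him => by simp [hz.2 i hi him]⟩

variable [Fintype ι]

theorem dotProduct_eq_sum_add_of_eq_zero {R : Type*} [NonUnitalNonAssocSemiring R]
    [DecidableEq ι] {O : Finset ι} {m : ι} {z : ι → R} (hm : m ∉ O)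
    (hz : ∀ i ∉ O, i ≠ m → z i = 0) (σ : ι → R) :
    z ⬝ᵥ σ = ∑ i ∈ O, z i * σ i + z m * σ m := by
  rw [dotProduct, ← sum_subset (subset_univ (insert m O)), sum_insert hm, add_comm]
  intro i _ hi
  rw [mem_insert, not_or] at hi
  rw [hz i hi.2 hi.1, zero_mul]

variable [DecidableEq ι]

theorem exists_isSignedSupport_of_modEq {O : Finset ι} {p : ι} {w z : ι → ℤ}
    (hw : IsSignedSupport O p w) (hp : p ∉ O) (hwp : w p = 2)
    (hzw : ∀ i, z i ≡ w i [ZMOD 2]) (hzz : z ⬝ᵥ z ≤ w ⬝ᵥ w) :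
    ∃ m ∉ O, IsSignedSupport O m z ∧ (z m = 2 ∨ z m = -2 ∨ z m = 0) := by
  -- `g i ≥ 0` is the excess of `z i ^ 2` over the least square of its parity class;
  -- the excesses add up to at most `|w|² - |O| = 4`.
  set g : ι → ℤ := fun i => z i ^ 2 - w i ^ 2 + if i = p then 4 else 0 with hg
  have hO : ∀ i ∈ O, z i % 2 = 1 ∧ g i = z i ^ 2 - 1 := fun i hi => by
    have hpar := hzw i
    rcases hw.1 i hi with h | h <;> rw [h] at hpar <;>
      exact ⟨hpar, by simp [hg, h, ne_of_mem_of_not_mem hi hp]⟩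
  have hc : ∀ i ∉ O, z i % 2 = 0 ∧ g i = z i ^ 2 := fun i hi => by
    have hpar := hzw i
    by_cases hip : i = p
    · subst hip; rw [hwp] at hpar; exact ⟨hpar, by simp [hg, hwp]⟩
    · rw [hw.2 i hi hip] at hpar; exact ⟨hpar, by simp [hg, hw.2 i hi hip, hip]⟩
  have hg_nonneg : ∀ i ∈ univ, 0 ≤ g i := fun i _ => by
    by_cases hi : i ∈ O
    · obtain ⟨hodd, hgi⟩ := hO i hi
      nlinarith [sq_pos_of_ne_zero (show z i ≠ 0 by omega)]
    · rw [(hc i hi).2]; positivity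
  have hg_sum : ∑ i, g i ≤ 4 := by
    have : ∑ i, g i = z ⬝ᵥ z - w ⬝ᵥ w + 4 := by
      simp only [hg, sum_add_distrib, sum_sub_distrib, sum_ite_eq', mem_univ, if_true,
        dotProduct, sq]
    linarith
  have hg_le : ∀ i, g i ≤ 4 := fun i => (single_le_sum hg_nonneg (mem_univ i)).trans hg_sum
  have hz3 : ∀ i, -3 < z i ∧ z i < 3 := fun i => by
    refine abs_lt_of_sq_lt_sq' ?_ (by norm_num)
    by_cases hi : i ∈ O
    · linarith [hg_le i, (hO i hi).2]
    · linarith [hg_le i, (hc i hi).2]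
  have hzO : ∀ i ∈ O, z i = 1 ∨ z i = -1 := fun i hi => by
    have := hz3 i; have := (hO i hi).1; omega
  have hzc : ∀ i ∉ O, z i = 2 ∨ z i = -2 ∨ z i = 0 := fun i hi => by
    have := hz3 i; have := (hc i hi).1; omega
  by_cases hnz : ∃ m ∉ O, z m ≠ 0
  · obtain ⟨m, hm, hzm⟩ := hnz
    refine ⟨m, hm, ⟨hzO, fun i hi him => ?_⟩, hzc m hm⟩
    by_contra hzi
    have h4 : ∀ k ∉ O, z k ≠ 0 → g k = 4 := fun k hk hzk => by
      rw [(hc k hk).2]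
      rcases hzc k hk with h | h | h <;> simp_all
    linarith [add_le_sum hg_nonneg (mem_univ i) (mem_univ m) him, h4 i hi hzi, h4 m hm hzm]
  · push Not at hnz
    exact ⟨p, hp, ⟨hzO, fun i hi _ => hnz i hi⟩, hzc p hp⟩

theorem eq_two_of_isSignedSupport {σ z : ι → ℤ} {O : Finset ι} {b m : ι} (hσ : ∀ i, 0 < σ i)
    (hb : b ∈ O) (hσb : ∑ i ∈ O.erase b, σ i < σ b) (hm : m ∉ O) (hz : IsSignedSupport O m z)
    (hzb : z b = -1) (hzm : z m = 2 ∨ z m = -2 ∨ z m = 0) (hzσ : z ⬝ᵥ σ = 0) : z m = 2 := by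
  rw [dotProduct_eq_sum_add_of_eq_zero hm hz.2, ← add_sum_erase O _ hb, hzb] at hzσ
  have : ∑ i ∈ O.erase b, z i * σ i ≤ ∑ i ∈ O.erase b, σ i := sum_le_sum fun i hi => by
    rcases hz.1 i (mem_of_mem_erase hi) with h | h <;> rw [h] <;> linarith [hσ i]
  have := hσ m
  rcases hzm with h | h | h <;> rw [h] at hzσ ⊢ <;> linarith

end SignedSupport

section SumOneSub

variable {ι : Type*} {S : Finset ι} {z σ : ι → ℤ}

theorem sum_one_sub_mul_nonneg (hz : ∀ i ∈ S, z i = 1 ∨ z i = -1) (hσ : ∀ i, 0 < σ i) :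
    0 ≤ ∑ i ∈ S, (1 - z i) * σ i :=
  sum_nonneg fun i hi => by rcases hz i hi with h | h <;> rw [h] <;> linarith [hσ i]

theorem sum_one_sub_mul_le (hz : ∀ i ∈ S, z i = 1 ∨ z i = -1) (hσ : ∀ i, 0 < σ i) :
    ∑ i ∈ S, (1 - z i) * σ i ≤ 2 * ∑ i ∈ S, σ i := by
  rw [mul_sum]
  exact sum_le_sum fun i hi => by rcases hz i hi with h | h <;> rw [h] <;> linarith [hσ i]

theorem eq_one_of_sum_one_sub_mul_eq_zero (hz : ∀ i ∈ S, z i = 1 ∨ z i = -1)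
    (hσ : ∀ i, 0 < σ i) (h : ∑ i ∈ S, (1 - z i) * σ i = 0) : ∀ i ∈ S, z i = 1 := by
  intro i hi
  have := (sum_eq_zero_iff_of_nonneg fun i hi => by
    rcases hz i hi with h | h <;> rw [h] <;> linarith [hσ i]).1 h i hi
  rcases hz i hi with h | h
  · exact h
  · rw [h] at this; linarith [hσ i]

end SumOneSub

section SpikeVec

variable {ι : Type*} [DecidableEq ι]

/-- `-e b + 2 e p + ∑_{i ∈ S} e i`, the common shape of tight vectors and of the vectors in
parts (1) and (2). -/
def spikeVec (b p : ι) (S : Finset ι) : ι → ℤ :=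
  fun i => if i = b then -1 else if i = p then 2 else if i ∈ S then 1 else 0

variable {b p : ι} {S : Finset ι}

theorem spikeVec_left : spikeVec b p S b = -1 := if_pos rfl

theorem spikeVec_of_ne_left (hpb : p ≠ b) : spikeVec b p S p = 2 := by
  simp [spikeVec, hpb]

theorem spikeVec_of_mem (hbS : b ∉ S) (hpS : p ∉ S) {i : ι} (hi : i ∈ S) :
    spikeVec b p S i = 1 := by
  simp [spikeVec, hi, ne_of_mem_of_not_mem hi hbS, ne_of_mem_of_not_mem hi hpS]

theorem isSignedSupport_spikeVec (hbS : b ∉ S) (hpS : p ∉ S) :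
    IsSignedSupport (insert b S) p (spikeVec b p S) := by
  refine ⟨fun i hi => ?_, fun i hi hip => ?_⟩
  · rcases mem_insert.1 hi with rfl | hi
    · exact Or.inr spikeVec_left
    · exact Or.inl (spikeVec_of_mem hbS hpS hi)
  · rw [mem_insert, not_or] at hi
    simp [spikeVec, hi.1, hi.2, hip]

variable [Fintype ι]

theorem spikeVec_dotProduct (hbS : b ∉ S) (hpS : p ∉ S) (hpb : p ≠ b) (σ : ι → ℤ) :
    spikeVec b p S ⬝ᵥ σ = 2 * σ p + ∑ i ∈ S, σ i - σ b := by
  rw [dotProduct_eq_sum_add_of_eq_zero (by simp [hpb, hpS]) (isSignedSupport_spikeVec hbS hpS).2,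
    sum_insert hbS, spikeVec_left, spikeVec_of_ne_left hpb,
    sum_congr rfl fun i hi => by rw [spikeVec_of_mem hbS hpS hi, one_mul]]
  ring

end SpikeVec

section Changemaker

variable {n : ℕ} {σ w : Fin (n + 1) → ℤ}

theorem IsCMIrreducible.neg (h : IsCMIrreducible σ w) : IsCMIrreducible σ (-w) := by
  rintro ⟨x, y, hx, hy, hxσ, hyσ, hsum, hxy⟩
  refine h ⟨-x, -y, neg_ne_zero.2 hx, neg_ne_zero.2 hy, ?_, ?_, ?_, ?_⟩
  · change -x ⬝ᵥ σ = 0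
    rw [neg_dotProduct, show x ⬝ᵥ σ = 0 from hxσ, neg_zero]
  · change -y ⬝ᵥ σ = 0
    rw [neg_dotProduct, show y ⬝ᵥ σ = 0 from hyσ, neg_zero]
  · rw [← neg_add, ← hsum, neg_neg]
  · change 0 ≤ -x ⬝ᵥ -y
    rwa [neg_dotProduct_neg]

theorem exists_modEq_two_of_not_isCMIrreducible (h : ¬ IsCMIrreducible σ w) :
    ∃ z, z ⬝ᵥ σ = 0 ∧ (∀ i, z i ≡ w i [ZMOD 2]) ∧ z ⬝ᵥ z ≤ w ⬝ᵥ w ∧ z ≠ w ∧ z ≠ -w := by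
  obtain ⟨x, y, hx, hy, hxσ, hyσ, rfl, hxy⟩ := not_not.1 h
  change x ⬝ᵥ σ = 0 at hxσ
  change y ⬝ᵥ σ = 0 at hyσ
  change 0 ≤ x ⬝ᵥ y at hxy
  refine ⟨x - y, by rw [sub_dotProduct, hxσ, hyσ, sub_zero], fun i => ?_, ?_, ?_, ?_⟩
  · simp only [Int.ModEq, Pi.sub_apply, Pi.add_apply]
    omega
  · simp only [sub_dotProduct, dotProduct_sub, add_dotProduct, dotProduct_add,
      dotProduct_comm y x]
    linarith
  · refine fun h => hy (funext fun i => ?_)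
    have := congrFun h i
    simp only [Pi.sub_apply, Pi.add_apply] at this
    simp only [Pi.zero_apply]
    linarith
  · refine fun h => hx (funext fun i => ?_)
    have := congrFun h i
    simp only [Pi.sub_apply, Pi.neg_apply, Pi.add_apply] at this
    simp only [Pi.zero_apply]
    linarith

theorem isCMIrreducible_of_forall {O : Finset (Fin (n + 1))} {p b : Fin (n + 1)}
    (hσ : ∀ i, 0 < σ i) (hw : IsSignedSupport O p w) (hp : p ∉ O)
    (hwp : w p = 2) (hwσ : w ⬝ᵥ σ = 0) (hb : b ∈ O) (hσb : ∑ i ∈ O.erase b, σ i < σ b)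
    (H : ∀ z m, m ∉ O → IsSignedSupport O m z → z b = -1 →
      ∑ i ∈ O, (w i - z i) * σ i = 2 * (σ m - σ p) → m = p ∧ ∀ i ∈ O, z i = w i) :
    IsCMIrreducible σ w := by
  have key : ∀ z, z ⬝ᵥ σ = 0 → ∀ m ∉ O, IsSignedSupport O m z →
      (z m = 2 ∨ z m = -2 ∨ z m = 0) → z b = -1 → z = w := by
    intro z hzσ m hm hz hzm hzb
    have hzm2 := eq_two_of_isSignedSupport hσ hb hσb hm hz hzb hzm hzσ
    rw [dotProduct_eq_sum_add_of_eq_zero hm hz.2, hzm2] at hzσ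
    rw [dotProduct_eq_sum_add_of_eq_zero hp hw.2, hwp] at hwσ
    have hbal : ∑ i ∈ O, (w i - z i) * σ i = 2 * (σ m - σ p) := by
      simp only [sub_mul, sum_sub_distrib]
      linarith
    obtain ⟨rfl, hO⟩ := H z m hm hz hzb hbal
    funext i
    by_cases hi : i ∈ O
    · exact hO i hi
    by_cases him : i = m
    · rw [him, hzm2, hwp]
    · rw [hz.2 i hi him, hw.2 i hi him]
  intro hred
  obtain ⟨z, hzσ, hzw, hzz, hne, hne'⟩ := exists_modEq_two_of_not_isCMIrreducible (not_not.2 hred)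
  obtain ⟨m, hm, hz, hzm⟩ := exists_isSignedSupport_of_modEq hw hp hwp hzw hzz
  rcases hz.1 b hb with hzb | hzb
  · refine hne' (neg_eq_iff_eq_neg.mp (key (-z) ?_ m hm hz.neg ?_ ?_))
    · rw [neg_dotProduct, hzσ, neg_zero]
    · simp only [Pi.neg_apply]; omega
    · simp [hzb]
  · exact hne (key z hzσ m hm hz hzm hzb)

theorem isCMIrreducible_spikeVec_of_forall {b p : Fin (n + 1)} {S : Finset (Fin (n + 1))}
    (hσ : ∀ i, 0 < σ i) (hbS : b ∉ S) (hpS : p ∉ S) (hpb : p ≠ b) (hwσ : spikeVec b p S ⬝ᵥ σ = 0)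
    (H : ∀ z m, m ∉ insert b S → IsSignedSupport (insert b S) m z → z b = -1 →
      ∑ i ∈ S, (1 - z i) * σ i = 2 * (σ m - σ p) → m = p ∧ ∀ i ∈ S, z i = 1) :
    IsCMIrreducible σ (spikeVec b p S) := by
  rw [spikeVec_dotProduct hbS hpS hpb] at hwσ
  refine isCMIrreducible_of_forall hσ (isSignedSupport_spikeVec hbS hpS) (by simp [hpb, hpS])
    (spikeVec_of_ne_left hpb) (by rwa [spikeVec_dotProduct hbS hpS hpb]) (mem_insert_self b S)
    (by rw [erase_insert hbS]; linarith [hσ p]) fun z m hm hz hzb hbal => ?_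
  rw [sum_insert hbS, spikeVec_left, hzb, sub_self, zero_mul, zero_add,
    sum_congr rfl fun i hi => by rw [spikeVec_of_mem hbS hpS hi]] at hbal
  obtain ⟨rfl, hS⟩ := H z m hm hz hzb hbal
  refine ⟨rfl, fun i hi => ?_⟩
  rcases mem_insert.1 hi with rfl | hi
  · rw [hzb, spikeVec_left]
  · rw [hS i hi, spikeVec_of_mem hbS hpS hi]

theorem tightVec_eq_spikeVec (t : Fin (n + 1)) :
    tightVec t = spikeVec t 0 (Ioo 0 t) := by
  have h0 : ((0 : Fin (n + 1)) : ℕ) = 0 := rfl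
  funext k
  simp only [tightVec, spikeVec, mem_Ioo]
  split_ifs <;> omega

theorem tightVec_dotProduct {t : Fin (n + 1)} (ht : t ≠ 0) :
    tightVec t ⬝ᵥ σ = 2 * σ 0 + ∑ i ∈ Ioo 0 t, σ i - σ t := by
  rw [tightVec_eq_spikeVec, spikeVec_dotProduct (by simp) (by simp) (Ne.symm ht)]

theorem tightVec_sub_tightVec {a b : Fin (n + 1)} (ha : a ≠ 0) (hab : a < b) :
    tightVec b - tightVec a = spikeVec b a (Ioo a b) := by
  have h0 : ((0 : Fin (n + 1)) : ℕ) = 0 := rfl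
  funext k
  simp only [Pi.sub_apply, tightVec, spikeVec, mem_Ioo]
  split_ifs <;> omega

theorem isCMIrreducible_tightVec_sub_tightVec (hσ : ∀ i, 0 < σ i) (hmono : Monotone σ)
    {a b : Fin (n + 1)} (ha : a ≠ 0) (hab : a < b)
    (hva : tightVec a ⬝ᵥ σ = 0) (hvb : tightVec b ⬝ᵥ σ = 0) :
    IsCMIrreducible σ (tightVec b - tightVec a) := by
  have hbS : b ∉ Ioo a b := by simp
  have haS : a ∉ Ioo a b := by simp
  have hwσ : spikeVec b a (Ioo a b) ⬝ᵥ σ = 0 := by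
    rw [← tightVec_sub_tightVec ha hab, sub_dotProduct, hva, hvb, sub_zero]
  have hσb := hwσ
  rw [spikeVec_dotProduct hbS haS hab.ne] at hσb
  rw [tightVec_dotProduct ha] at hva
  have hσa : ∀ m < a, σ m < σ a := fun m hm => by
    have hIoo := sum_nonneg fun i (_ : i ∈ Ioo 0 a) => (hσ i).le
    by_cases hm0 : m = 0
    · subst hm0; linarith [hσ 0]
    · have := single_le_sum (fun i _ => (hσ i).le) (mem_Ioo.2 ⟨Fin.pos_of_ne_zero hm0, hm⟩)
      linarith [hσ 0]
  rw [tightVec_sub_tightVec ha hab]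
  refine isCMIrreducible_spikeVec_of_forall hσ hbS haS hab.ne hwσ fun z m hm hz _ hbal => ?_
  have hzS : ∀ i ∈ Ioo a b, z i = 1 ∨ z i = -1 := fun i hi => hz.1 i (mem_insert_of_mem hi)
  have hlow := sum_one_sub_mul_nonneg hzS hσ
  have hup := sum_one_sub_mul_le hzS hσ
  have hma : m = a := by
    rw [mem_insert, mem_Ioo, not_or] at hm
    rcases lt_trichotomy m a with hlt | heq | hgt
    · exfalso
      linarith [hσa m hlt]
    · exact heq
    · have hbm : b < m := by omega
      have := hmono hbm.le
      exfalso
      linarith [hσ a]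
  subst hma
  exact ⟨rfl, eq_one_of_sum_one_sub_mul_eq_zero hzS hσ (by linarith)⟩

theorem neg_stdb_add_stdb_add_stdb_add_tightVec {t j j' : Fin (n + 1)} (ht : t ≠ 0)
    (htj : t < j) (hjj' : (j' : ℕ) + 1 = j) :
    -stdb j + stdb j' + stdb t + tightVec t = spikeVec j 0 (insert j' (Ioo 0 t)) := by
  have h0 : ((0 : Fin (n + 1)) : ℕ) = 0 := rfl
  funext k
  simp only [Pi.add_apply, Pi.neg_apply, stdb, tightVec, spikeVec, mem_insert, mem_Ioo]
  split_ifs <;> omega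

theorem isCMIrreducible_neg_stdb_add_stdb_add_stdb_add_tightVec (hσ : ∀ i, 0 < σ i)
    (hmono : Monotone σ) {t j j' : Fin (n + 1)} (ht : t ≠ 0) (htj : t < j)
    (hjj' : (j' : ℕ) + 1 = j) (hvt : tightVec t ⬝ᵥ σ = 0)
    (hv : (-stdb j + stdb j' + stdb t) ⬝ᵥ σ = 0) :
    IsCMIrreducible σ (-stdb j + stdb j' + stdb t + tightVec t) := by
  have h0 : ((0 : Fin (n + 1)) : ℕ) = 0 := rfl
  have hj'I : j' ∉ Ioo 0 t := by simp only [mem_Ioo]; omega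
  have hjS : j ∉ insert j' (Ioo 0 t) := by simp only [mem_insert, mem_Ioo]; omega
  have h0S : (0 : Fin (n + 1)) ∉ insert j' (Ioo 0 t) := by
    simp only [mem_insert, mem_Ioo]; omega
  have h0j : (0 : Fin (n + 1)) ≠ j := by omega
  have hwσ : spikeVec j 0 (insert j' (Ioo 0 t)) ⬝ᵥ σ = 0 := by
    rw [← neg_stdb_add_stdb_add_stdb_add_tightVec ht htj hjj', add_dotProduct, hv, hvt,
      add_zero]
  have hσj := hwσ
  rw [spikeVec_dotProduct hjS h0S h0j, sum_insert hj'I] at hσj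
  rw [tightVec_dotProduct ht] at hvt
  rw [neg_stdb_add_stdb_add_stdb_add_tightVec ht htj hjj']
  refine isCMIrreducible_spikeVec_of_forall hσ hjS h0S h0j hwσ fun z m hm hz _ hbal => ?_
  have hzS : ∀ i ∈ insert j' (Ioo 0 t), z i = 1 ∨ z i = -1 :=
    fun i hi => hz.1 i (mem_insert_of_mem hi)
  have hm0 : m = 0 := by
    by_contra hm0
    simp only [mem_insert, mem_Ioo, not_or] at hm
    have htm : t ≤ m := by omega
    have := hmono htm
    rw [sum_insert hj'I] at hbal
    have hzI : ∀ i ∈ Ioo 0 t, z i = 1 ∨ z i = -1 := fun i hi => hzS i (mem_insert_of_mem hi)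
    have hlow := sum_one_sub_mul_nonneg hzI hσ
    have hup := sum_one_sub_mul_le hzI hσ
    rcases hzS j' (mem_insert_self _ _) with hzj' | hzj'
    · rw [hzj'] at hbal
      linarith [hσ 0]
    · rw [hzj'] at hbal
      have hj'm : j' < m := hmono.reflect_lt (by linarith [hσ 0])
      have := hmono (show j ≤ m by omega)
      linarith [hσ 0]
  subst hm0
  exact ⟨rfl, eq_one_of_sum_one_sub_mul_eq_zero hzS hσ (by linarith)⟩

theorem sub_tightVec_apply {t t' : Fin (n + 1)} (ht' : (t' : ℕ) = t + 1) (k : Fin (n + 1)) :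
    ((fun k => if k = t' then (-1 : ℤ) else if k ≤ t then 1 else 0) - tightVec t) k =
      if k = t' then -1 else if k = t then 2 else if k = 0 then -1 else 0 := by
  have h0 : ((0 : Fin (n + 1)) : ℕ) = 0 := rfl
  simp only [Pi.sub_apply, tightVec]
  split_ifs <;> omega

theorem isCMIrreducible_sub_tightVec (hσ : ∀ i, 0 < σ i) (hmono : Monotone σ)
    {t t' : Fin (n + 1)} (ht : t ≠ 0) (ht' : (t' : ℕ) = t + 1) (hvt : tightVec t ⬝ᵥ σ = 0)
    (hv : (fun k => if k = t' then (-1 : ℤ) else if k ≤ t then 1 else 0) ⬝ᵥ σ = 0) :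
    IsCMIrreducible σ
      ((fun k => if k = t' then (-1 : ℤ) else if k ≤ t then 1 else 0) - tightVec t) := by
  have h0 : ((0 : Fin (n + 1)) : ℕ) = 0 := rfl
  set w := (fun k => if k = t' then (-1 : ℤ) else if k ≤ t then 1 else 0) - tightVec t with hw
  have hwσ : w ⬝ᵥ σ = 0 := by rw [hw, sub_dotProduct, hv, hvt, sub_zero]
  have hwt' : w t' = -1 := by simp [w, sub_tightVec_apply ht']
  have hwt : w t = 2 := by simp [w, sub_tightVec_apply ht']; omega
  have hw0 : w 0 = -1 := by simp [w, sub_tightVec_apply ht']; omega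
  have hO : IsSignedSupport {t', 0} t w := by
    refine ⟨fun i hi => ?_, fun i hi hit => ?_⟩
    · simp only [mem_insert, mem_singleton] at hi
      rcases hi with rfl | rfl <;> simp [hwt', hw0]
    · simp only [mem_insert, mem_singleton, not_or] at hi
      simp [w, sub_tightVec_apply ht', hi.1, hi.2, hit]
  have htO : t ∉ ({t', 0} : Finset (Fin (n + 1))) := by
    simp only [mem_insert, mem_singleton]; omega
  have hσt' := hwσ
  rw [dotProduct_eq_sum_add_of_eq_zero htO hO.2, sum_pair (by omega), hwt, hwt', hw0] at hσt'
  rw [tightVec_dotProduct ht] at hvt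
  have hIoo := sum_nonneg fun i (_ : i ∈ Ioo 0 t) => (hσ i).le
  refine isCMIrreducible_of_forall hσ hO htO hwt hwσ (mem_insert_self _ _)
    (by rw [erase_insert (by simp; omega), sum_singleton]; linarith [hσ 0])
    fun z m hm hz hzt' hbal => ?_
  simp only [mem_insert, mem_singleton, not_or] at hm
  rw [sum_pair (by omega), hwt', hw0, hzt', sub_self, zero_mul, zero_add] at hbal
  have hz0 := hz.1 0 (by simp)
  have hσm : σ t - σ 0 ≤ σ m ∧ σ m ≤ σ t := by
    rcases hz0 with h | h <;> rw [h] at hbal <;> constructor <;> linarith [hσ 0]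
  have hmt : m = t := by
    rcases lt_trichotomy m t with hlt | heq | hgt
    · have := single_le_sum (fun i _ => (hσ i).le) (mem_Ioo.2 ⟨Fin.pos_of_ne_zero hm.2, hlt⟩)
      linarith [hσ 0]
    · exact heq
    · linarith [hσ 0, hmono (show t' ≤ m by omega)]
  subst hmt
  refine ⟨rfl, fun i hi => ?_⟩
  simp only [mem_insert, mem_singleton] at hi
  rcases hi with rfl | rfl
  · rw [hzt', hwt']
  · rcases hz0 with h | h
    · rw [h] at hbal; linarith [hσ 0]
    · rw [h, hw0]

end Changemaker

/-- **Irreducibility around a tight vector.** Suppose the tight vector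
`v_t = -e_t + 2e_0 + e_1 + ⋯ + e_{t-1}` lies in the changemaker lattice
`L = (σ)^⊥`.  Then: (1) for `j ≠ t`, if the tight vector `v_j` lies in `L`,
then `v_j − v_t` is irreducible; (2) for `j > t`, if
`v_j = -e_j + e_{j-1} + e_t ∈ L`, then `v_j + v_t` is irreducible; (3) if
`v_{t+1} = -e_{t+1} + e_t + ⋯ + e_0 ∈ L`, then `v_{t+1} − v_t` is
irreducible. -/
theorem tight_vector_irreducibles (n : ℕ) (σ : Fin (n + 1) → ℤ)
    (hσ : IsChangemaker σ) (t : Fin (n + 1)) (ht : t ≠ 0)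
    (hvtL : ∑ i, tightVec t i * σ i = 0) :
    (∀ j : Fin (n + 1), j ≠ t → j ≠ 0 →
      (∑ i, tightVec j i * σ i = 0) →
      IsCMIrreducible σ (tightVec j - tightVec t)) ∧
    (∀ j j' : Fin (n + 1), t < j → (j' : ℕ) + 1 = (j : ℕ) →
      (∑ i, (-stdb j + stdb j' + stdb t) i * σ i = 0) →
      IsCMIrreducible σ ((-stdb j + stdb j' + stdb t) + tightVec t)) ∧
    (∀ t' : Fin (n + 1), (t' : ℕ) = (t : ℕ) + 1 →
      (∑ i, (fun k => if k = t' then (-1 : ℤ) else if k ≤ t then 1 else 0) i * σ i = 0) →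
      IsCMIrreducible σ
        ((fun k => if k = t' then (-1 : ℤ) else if k ≤ t then 1 else 0) - tightVec t)) := by
  obtain ⟨hσ0, hmono, -⟩ := hσ
  have hpos : ∀ i, 0 < σ i := fun i => by linarith [hmono (Fin.zero_le i)]
  refine ⟨fun j hjt hj0 hvj => ?_, fun j j' htj hjj' hv => ?_, fun t' ht' hv => ?_⟩
  · rcases hjt.lt_or_gt with hjt | htj
    · rw [← neg_sub]
      exact (isCMIrreducible_tightVec_sub_tightVec hpos hmono hj0 hjt hvj hvtL).neg
    · exact isCMIrreducible_tightVec_sub_tightVec hpos hmono ht htj hvtL hvj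
  · exact isCMIrreducible_neg_stdb_add_stdb_add_stdb_add_tightVec hpos hmono ht htj hjj' hvtL hv
  · exact isCMIrreducible_sub_tightVec hpos hmono ht ht' hvtL hv
end

section
/- Let a_1, …, a_l ≥ 2 be integers with continuants p_l, q_l and r_l = p_l − q_l, and let b_1, …, b_m ≥ 2 be integers whose continuant numerator equals p_l and whose continuant denominator equals r_l (i.e., [b_1,…,b_m]^- = p_l / r_l). Then for every integer t ≥ 1, the sequence (a_1, …, a_l, t+1, b_m, b_{m−1}, …, b_2) has continuant numerator p_l r_l t + 1 and continuant denominator q_l r_l t + 1. -/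
/-!
Splitting the glued sequence after `(a_1,…,a_l, t+1)` expresses its continuants through
`p_l, p_{l-1}, q_l, q_{l-1}` and the continuants of the tail `(b_m,…,b_2)`, which by reversal are
`q_m = r_l` and `q_{m-1}` of `b`. The determinant identities of `a` and `b` show that `p_{m-1}(b)`
and `p_l - p_{l-1}` both solve `x r_l ≡ 1 (mod p_l)` in `(0, p_l)`, so they agree and
`q_{m-1}(b) = r_l - r_{l-1}`. Substituting, both claims reduce to the determinant identity of `a`.
-/

/-- Continuant numerators `p_j` of `[c_1, c_2, …]⁻`:
`p_0 = 1`, `p_1 = c_1`, `p_j = c_j p_{j-1} - p_{j-2}`. -/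
def contP (c : ℕ → ℤ) : ℕ → ℤ
  | 0 => 1
  | 1 => c 1
  | (j + 2) => c (j + 2) * contP c (j + 1) - contP c j

/-- Continuant denominators `q_j` of `[c_1, c_2, …]⁻`:
`q_0 = 0`, `q_1 = 1`, `q_j = c_j q_{j-1} - q_{j-2}`. -/
def contQ (c : ℕ → ℤ) : ℕ → ℤ
  | 0 => 0
  | 1 => 1
  | (j + 2) => c (j + 2) * contQ c (j + 1) - contQ c j

theorem contP_add_two (c : ℕ → ℤ) (n : ℕ) :
    contP c (n + 2) = c (n + 2) * contP c (n + 1) - contP c n := rfl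

theorem contQ_add_two (c : ℕ → ℤ) (n : ℕ) :
    contQ c (n + 2) = c (n + 2) * contQ c (n + 1) - contQ c n := rfl

theorem eq_mul_contP_sub_mul_contQ (c f : ℕ → ℤ)
    (hf : ∀ j, f (j + 2) = c (j + 2) * f (j + 1) - f j) (n k : ℕ) :
    f (n + 1 + k) = f (n + 1) * contP (fun j => c (n + 1 + j)) k
      - f n * contQ (fun j => c (n + 1 + j)) k := by
  induction k using Nat.twoStepInduction with
  | zero => simp [contP, contQ]
  | one => simp only [contP, contQ, hf n]; ring
  | more k ih₀ ih₁ =>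
    have h := hf (n + 1 + k)
    rw [show n + 1 + k + 2 = n + 1 + (k + 2) by omega,
      show n + 1 + k + 1 = n + 1 + (k + 1) by omega] at h
    rw [contP_add_two, contQ_add_two, h, ih₀, ih₁]
    ring

theorem contP_succ_eq (c : ℕ → ℤ) (k : ℕ) :
    contP c (k + 1) = c 1 * contP (fun j => c (j + 1)) k - contQ (fun j => c (j + 1)) k := by
  simpa [add_comm, contP] using eq_mul_contP_sub_mul_contQ c (contP c) (contP_add_two c) 0 k

theorem contQ_succ_eq_contP (c : ℕ → ℤ) (k : ℕ) :
    contQ c (k + 1) = contP (fun j => c (j + 1)) k := by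
  simpa [add_comm, contQ] using eq_mul_contP_sub_mul_contQ c (contQ c) (contQ_add_two c) 0 k

theorem contP_congr {c d : ℕ → ℤ} {n : ℕ} (h : ∀ i, 1 ≤ i → i ≤ n → c i = d i) :
    contP c n = contP d n := by
  induction n using Nat.twoStepInduction with
  | zero => rfl
  | one => exact h 1 le_rfl le_rfl
  | more n ih₀ ih₁ =>
    rw [contP_add_two, contP_add_two, h (n + 2) (by omega) le_rfl,
      ih₀ fun i hi hin => h i hi (by omega), ih₁ fun i hi hin => h i hi (by omega)]

theorem contQ_congr {c d : ℕ → ℤ} {n : ℕ} (h : ∀ i, 1 ≤ i → i ≤ n → c i = d i) :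
    contQ c n = contQ d n := by
  cases n with
  | zero => rfl
  | succ n =>
    rw [contQ_succ_eq_contP, contQ_succ_eq_contP]
    exact contP_congr fun i hi hin => h (i + 1) (by omega) (by omega)

theorem contP_mul_contQ_succ_sub (c : ℕ → ℤ) (n : ℕ) :
    contP c n * contQ c (n + 1) - contP c (n + 1) * contQ c n = 1 := by
  induction n with
  | zero => simp [contP, contQ]
  | succ n ih =>
    rw [contP_add_two, contQ_add_two]
    linear_combination ih

theorem contP_reverse (c : ℕ → ℤ) (n : ℕ) : contP (fun i => c (n + 1 - i)) n = contP c n := by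
  induction n using Nat.twoStepInduction with
  | zero => rfl
  | one => rfl
  | more n ih₀ ih₁ =>
    have e₁ : (fun j => c (n + 2 + 1 - (j + 1))) = fun i => c (n + 1 + 1 - i) := by
      funext j; congr 1; omega
    have e₂ : (fun j => c (n + 2 + 1 - (j + 1 + 1))) = fun i => c (n + 1 - i) := by
      funext j; congr 1; omega
    rw [contP_succ_eq, contQ_succ_eq_contP, contP_add_two, ← ih₀, ← ih₁]
    simp only [e₁, e₂]
    rfl

theorem contP_pos_and_lt_succ {c : ℕ → ℤ} {n : ℕ} (hc : ∀ i, 1 ≤ i → i ≤ n + 1 → 2 ≤ c i) :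
    0 < contP c n ∧ contP c n < contP c (n + 1) := by
  induction n with
  | zero => simp only [contP]; have := hc 1 le_rfl le_rfl; omega
  | succ n ih =>
    obtain ⟨hpos, hlt⟩ := ih fun i hi hin => hc i hi (by omega)
    have h2 := hc (n + 2) (by omega) le_rfl
    rw [contP_add_two]
    constructor <;> nlinarith

theorem contP_reverse_tail (b : ℕ → ℤ) (n : ℕ) :
    contP (fun j => b (n + 2 - j)) n = contQ b (n + 1) := by
  rw [contQ_succ_eq_contP, ← contP_reverse]
  exact contP_congr fun i _ hin => congrArg b (by omega)

theorem contQ_reverse_tail (b : ℕ → ℤ) (n : ℕ) :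
    contQ (fun j => b (n + 2 - j)) n = contQ b n := by
  cases n with
  | zero => rfl
  | succ n =>
    rw [contQ_succ_eq_contP, ← contP_reverse_tail]
    exact contP_congr fun i _ _ => congrArg b (by omega)

theorem eq_and_eq_of_mul_sub_mul_eq_one {p r x y u v : ℤ} (hx : x * r - p * u = 1)
    (hy : y * r - p * v = 1) (hxy : |x - y| < p) : x = y ∧ u = v := by
  have hcop : IsCoprime p r := ⟨-u, x, by linear_combination hx⟩
  have hdvd : p ∣ (x - y) * r := ⟨u - v, by linear_combination hx - hy⟩
  have hxy' : x = y :=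
    sub_eq_zero.mp <| Int.eq_zero_of_abs_lt_dvd (hcop.dvd_of_dvd_mul_right hdvd) hxy
  have hp : p ≠ 0 := (lt_of_le_of_lt (abs_nonneg _) hxy).ne'
  refine ⟨hxy', ?_⟩
  subst hxy'
  exact mul_left_cancel₀ hp (by linear_combination hy - hx)

theorem contP_contQ_eq_of_succ_eq {a b : ℕ → ℤ} {l n : ℕ}
    (ha : ∀ i, 1 ≤ i → i ≤ l + 1 → 2 ≤ a i) (hb : ∀ i, 1 ≤ i → i ≤ n + 1 → 2 ≤ b i)
    (hnum : contP b (n + 1) = contP a (l + 1))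
    (hden : contQ b (n + 1) = contP a (l + 1) - contQ a (l + 1)) :
    contP b n = contP a (l + 1) - contP a l ∧
      contQ b n = (contP a (l + 1) - contQ a (l + 1)) - (contP a l - contQ a l) := by
  have hdet_a := contP_mul_contQ_succ_sub a l
  have hdet_b := contP_mul_contQ_succ_sub b n
  rw [hnum, hden] at hdet_b
  obtain ⟨ha₀, ha₁⟩ := contP_pos_and_lt_succ ha
  obtain ⟨hb₀, hb₁⟩ := contP_pos_and_lt_succ hb
  rw [hnum] at hb₁
  exact eq_and_eq_of_mul_sub_mul_eq_one (r := contP a (l + 1) - contQ a (l + 1)) hdet_b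
    (by linear_combination hdet_a) (abs_lt.mpr ⟨by linarith, by linarith⟩)

theorem continuant_glue_t_general (l m : ℕ) (hl : 1 ≤ l) (hm : 1 ≤ m)
    (a b : ℕ → ℤ)
    (ha : ∀ i, 1 ≤ i → i ≤ l → 2 ≤ a i) (hb : ∀ i, 1 ≤ i → i ≤ m → 2 ≤ b i)
    (hnum : contP b m = contP a l)
    (hden : contQ b m = contP a l - contQ a l)
    (t : ℤ)
    (c : ℕ → ℤ)
    (hc : c = fun i => if i ≤ l then a i
                       else if i = l + 1 then t + 1
                       else b (l + m + 2 - i)) :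
    contP c (l + m) = contP a l * (contP a l - contQ a l) * t + 1 ∧
    contQ c (l + m) = contQ a l * (contP a l - contQ a l) * t + 1 := by
  obtain ⟨l, rfl⟩ : ∃ k, l = k + 1 := ⟨l - 1, by omega⟩
  obtain ⟨n, rfl⟩ : ∃ n, m = n + 1 := ⟨m - 1, by omega⟩
  have hprefix : ∀ i, 1 ≤ i → i ≤ l + 1 → c i = a i := fun i _ hi => by simp [hc, hi]
  have hmid : c (l + 2) = t + 1 := by simp [hc]
  have htail : ∀ j, 1 ≤ j → j ≤ n → c (l + 1 + 1 + j) = b (n + 2 - j) := fun j _ _ => by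
    simp only [hc]; rw [if_neg (by omega), if_neg (by omega)]; congr 1; omega
  obtain ⟨-, hQb⟩ := contP_contQ_eq_of_succ_eq ha hb hnum hden
  have hdet := contP_mul_contQ_succ_sub a l
  rw [show l + 1 + (n + 1) = l + 1 + 1 + n by omega,
    eq_mul_contP_sub_mul_contQ c (contP c) (contP_add_two c),
    eq_mul_contP_sub_mul_contQ c (contQ c) (contQ_add_two c)]
  rw [contP_congr htail, contQ_congr htail, contP_reverse_tail, contQ_reverse_tail, hden, hQb]
  rw [contP_add_two, contQ_add_two, hmid, contP_congr hprefix, contQ_congr hprefix,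
    contP_congr fun i hi _ => hprefix i hi (by omega),
    contQ_congr fun i hi _ => hprefix i hi (by omega)]
  constructor <;> linear_combination hdet

/-- **Lemma on glued continued fractions.** Let `a_1,…,a_l ≥ 2` have continuants
`p_l, q_l`, `r_l = p_l - q_l`, and let `b_1,…,b_m ≥ 2` satisfy
`[b_1,…,b_m]⁻ = p_l / r_l` (as continuant numerator and denominator).  Then for
every integer `t ≥ 1` the sequence `(a_1,…,a_l, t+1, b_m,…,b_2)` has continuant
numerator `p_l r_l t + 1` and denominator `q_l r_l t + 1`. -/
theorem continuant_glue_t (l m : ℕ) (hl : 1 ≤ l) (hm : 1 ≤ m)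
    (a b : ℕ → ℤ)
    (ha : ∀ i, 1 ≤ i → i ≤ l → 2 ≤ a i) (hb : ∀ i, 1 ≤ i → i ≤ m → 2 ≤ b i)
    (hnum : contP b m = contP a l)
    (hden : contQ b m = contP a l - contQ a l)
    (t : ℤ) (ht : 1 ≤ t)
    (c : ℕ → ℤ)
    (hc : c = fun i => if i ≤ l then a i
                       else if i = l + 1 then t + 1
                       else b (l + m + 2 - i)) :
    contP c (l + m) = contP a l * (contP a l - contQ a l) * t + 1 ∧
    contQ c (l + m) = contQ a l * (contP a l - contQ a l) * t + 1 :=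
  continuant_glue_t_general l m hl hm a b ha hb hnum hden t c hc
end
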